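/- arXiv:1201.0931 — 9 statements merged into one kernel-verified Lean document; each statement's English description precedes it below -/
import Mathlib

section
/- Let f be a multiplicative arithmetic function with rational values such that f(m) ≠ 0 for every positive integer m, let n ≥ 1 be an integer, and let a_1, …, a_n be positive integers. Then f(lcm(a_1,…,a_n)) = f(a_1)⋯f(a_n) · ∏_{r=2}^{n} ∏_{1 ≤ i_1 < ⋯ < i_r ≤ n} (f(gcd(a_{i_1},…,a_{i_r})))^{(−1)^{r−1}}. -/
open Finset

private lemma hua_gcd_lcm_distrib (b x y : ℕ) (hb : b ≠ 0) (hx : x ≠ 0) (hy : y ≠ 0) :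
    Nat.gcd b (Nat.lcm x y) = Nat.lcm (Nat.gcd b x) (Nat.gcd b y) := by
  have hbx : Nat.gcd b x ≠ 0 := Nat.gcd_ne_zero_right hx
  have hby : Nat.gcd b y ≠ 0 := Nat.gcd_ne_zero_right hy
  apply Nat.eq_of_factorization_eq (Nat.gcd_ne_zero_left hb) (Nat.lcm_ne_zero hbx hby)
  intro p
  rw [Nat.factorization_gcd hb (Nat.lcm_ne_zero hx hy), Nat.factorization_lcm hbx hby,
    Nat.factorization_lcm hx hy, Nat.factorization_gcd hb hx, Nat.factorization_gcd hb hy]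
  simp only [Finsupp.inf_apply, Finsupp.sup_apply]
  omega

private lemma hua_gcd_finset_lcm {ι : Type*} [DecidableEq ι] (T : Finset ι) (hT : T.Nonempty)
    (b : ℕ) (hb : b ≠ 0) (a : ι → ℕ) (ha : ∀ i ∈ T, a i ≠ 0) :
    Nat.gcd b (T.lcm a) = T.lcm (fun j => Nat.gcd b (a j)) := by
  induction hT using Finset.Nonempty.cons_induction with
  | singleton j => simp [lcm_eq_nat_lcm, Nat.lcm]
  | cons j T hj hT ih =>
    simp only [Finset.cons_eq_insert, Finset.lcm_insert, lcm_eq_nat_lcm]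
    have hL : T.lcm a ≠ 0 := by
      simp only [Ne, Finset.lcm_eq_zero_iff, Set.mem_image]
      rintro ⟨x, hx, h0⟩
      exact ha x (Finset.mem_cons_of_mem hx) h0
    rw [hua_gcd_lcm_distrib b (a j) (T.lcm a) hb (ha j (Finset.mem_cons_self j T)) hL,
      ih (fun i hi => ha i (Finset.mem_cons_of_mem hi))]

private lemma hua_gcd_finset_gcd {ι : Type*} [DecidableEq ι] (T : Finset ι) (hT : T.Nonempty)
    (b : ℕ) (a : ι → ℕ) :
    T.gcd (fun j => Nat.gcd b (a j)) = Nat.gcd b (T.gcd a) := by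
  induction hT using Finset.Nonempty.cons_induction with
  | singleton j => simp [gcd_eq_nat_gcd]
  | cons j T hj hT ih =>
    simp only [Finset.cons_eq_insert, Finset.gcd_insert, gcd_eq_nat_gcd, ih]
    apply Nat.dvd_antisymm
    · exact Nat.dvd_gcd ((Nat.gcd_dvd_left _ _).trans (Nat.gcd_dvd_left _ _))
        (Nat.dvd_gcd ((Nat.gcd_dvd_left _ _).trans (Nat.gcd_dvd_right _ _))
          ((Nat.gcd_dvd_right _ _).trans (Nat.gcd_dvd_right _ _)))
    · exact Nat.dvd_gcd (Nat.dvd_gcd (Nat.gcd_dvd_left _ _)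
          ((Nat.gcd_dvd_right _ _).trans (Nat.gcd_dvd_left _ _)))
        (Nat.dvd_gcd (Nat.gcd_dvd_left _ _)
          ((Nat.gcd_dvd_right _ _).trans (Nat.gcd_dvd_right _ _)))

private lemma hua_lemmaA (f : ℕ → ℚ) (hf1 : f 1 = 1)
    (hfmul : ∀ m n : ℕ, 0 < m → 0 < n → Nat.Coprime m n → f (m * n) = f m * f n)
    (x y : ℕ) (hx : 0 < x) (hy : 0 < y) :
    f (Nat.lcm x y) * f (Nat.gcd x y) = f x * f y := by
  set F : ArithmeticFunction ℚ := ⟨fun m => if m = 0 then 0 else f m, by simp⟩ with hF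
  have hFm : F.IsMultiplicative := by
    constructor
    · simp [hF, hf1]
    · intro m n h
      rcases Nat.eq_zero_or_pos m with rfl|hm
      · simp [hF]
      rcases Nat.eq_zero_or_pos n with rfl|hn
      · simp [hF]
      simp [hF, hm.ne', hn.ne', Nat.mul_ne_zero hm.ne' hn.ne', hfmul m n hm hn h]
  have := hFm.lcm_apply_mul_gcd_apply (x := x) (y := y)
  simpa [hF, (Nat.lcm_ne_zero hx.ne' hy.ne'), (Nat.gcd_ne_zero_left hx.ne'), hx.ne', hy.ne',
    ArithmeticFunction.coe_mk] using this

private lemma hua_general (f : ℕ → ℚ) (hf1 : f 1 = 1)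
    (hfmul : ∀ m n : ℕ, 0 < m → 0 < n → Nat.Coprime m n → f (m * n) = f m * f n)
    (hfne : ∀ m : ℕ, 0 < m → f m ≠ 0)
    {ι : Type*} [DecidableEq ι] (T : Finset ι) (hT : T.Nonempty) (a : ι → ℕ)
    (ha : ∀ i ∈ T, 0 < a i) :
    f (T.lcm a) = ∏ S ∈ T.powerset.filter (fun S => S.Nonempty),
      f (S.gcd a) ^ ((-1 : ℤ) ^ (S.card - 1)) := by
  induction T using Finset.induction_on generalizing a with
  | empty => exact absurd hT (by simp)
  | @insert i T hi ih =>
    have hipos : 0 < a i := ha i (Finset.mem_insert_self i T)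
    rcases T.eq_empty_or_nonempty with rfl | hTne
    · have hps : ({i} : Finset ι).powerset.filter (fun S => S.Nonempty) = {{i}} := by
        ext S
        simp only [Finset.mem_filter, Finset.mem_powerset, Finset.subset_singleton_iff,
          Finset.mem_singleton, Finset.nonempty_iff_ne_empty]
        constructor
        · rintro ⟨h | h, hne⟩
          · exact absurd h hne
          · exact h
        · rintro rfl
          exact ⟨Or.inr rfl, Finset.singleton_ne_empty i⟩
      rw [show insert i (∅ : Finset ι) = {i} from rfl, hps, Finset.prod_singleton,
        Finset.lcm_singleton, Finset.gcd_singleton, normalize_eq, Finset.card_singleton]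
      norm_num
    · set L := T.lcm a with hLdef
      have hTpos : ∀ j ∈ T, 0 < a j := fun j hj => ha j (Finset.mem_insert_of_mem hj)
      have hLpos : 0 < L := by
        rw [Nat.pos_iff_ne_zero]
        simp only [hLdef, Ne, Finset.lcm_eq_zero_iff, Set.mem_image]
        rintro ⟨x, hx, h0⟩
        exact absurd h0 (hTpos x hx).ne'
      set b : ι → ℕ := fun j => Nat.gcd (a i) (a j) with hbdef
      have hbpos : ∀ j ∈ T, 0 < b j :=
        fun j _ => Nat.pos_of_ne_zero (Nat.gcd_ne_zero_left hipos.ne')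
      have hgcdL : T.lcm b = Nat.gcd (a i) L :=
        (hua_gcd_finset_lcm T hTne (a i) hipos.ne' a (fun j hj => (hTpos j hj).ne')).symm
      have hgpos : 0 < Nat.gcd (a i) L := Nat.pos_of_ne_zero (Nat.gcd_ne_zero_left hipos.ne')
      -- split the powerset
      have hsplit : (insert i T).powerset.filter (fun S => S.Nonempty)
          = (T.powerset.filter fun S => S.Nonempty) ∪ T.powerset.image (insert i) := by
        rw [Finset.powerset_insert, Finset.filter_union]
        congr 1
        apply Finset.filter_true_of_mem
        intro S hS
        rcases Finset.mem_image.mp hS with ⟨S', _, rfl⟩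
        exact Finset.insert_nonempty _ _
      have hdisj : Disjoint (T.powerset.filter fun S => S.Nonempty)
          (T.powerset.image (insert i)) := by
        rw [Finset.disjoint_left]
        intro S hS1 hS2
        rcases Finset.mem_image.mp hS2 with ⟨S', _, rfl⟩
        have hSsub : insert i S' ⊆ T := Finset.mem_powerset.mp (Finset.mem_filter.mp hS1).1
        exact hi (hSsub (Finset.mem_insert_self _ _))
      have hinj : ∀ x ∈ T.powerset, ∀ y ∈ T.powerset, insert i x = insert i y → x = y := by
        intro x hx y hy h
        have hix : i ∉ x := fun hc => hi (Finset.mem_powerset.mp hx hc)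
        have hiy : i ∉ y := fun hc => hi (Finset.mem_powerset.mp hy hc)
        rw [← Finset.erase_insert hix, ← Finset.erase_insert hiy, h]
      rw [hsplit, Finset.prod_union hdisj, Finset.prod_image hinj]
      -- split off the empty set from T.powerset
      have hmem : (∅ : Finset ι) ∈ T.powerset := Finset.empty_mem_powerset T
      rw [← Finset.mul_prod_erase _ _ hmem]
      have herase : T.powerset.erase ∅ = T.powerset.filter fun S => S.Nonempty := by
        ext S
        simp [Finset.nonempty_iff_ne_empty, and_comm]
      have hempty : f ((insert i (∅ : Finset ι)).gcd a)
          ^ ((-1 : ℤ) ^ ((insert i (∅ : Finset ι)).card - 1)) = f (a i) := by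
        rw [show insert i (∅ : Finset ι) = {i} from rfl, Finset.gcd_singleton, normalize_eq,
          Finset.card_singleton]
        norm_num
      rw [herase, hempty]
      have hterm : ∀ S ∈ T.powerset.filter (fun S => S.Nonempty),
          f ((insert i S).gcd a) ^ ((-1 : ℤ) ^ ((insert i S).card - 1))
            = (f (S.gcd b) ^ ((-1 : ℤ) ^ (S.card - 1)))⁻¹ := by
        intro S hS
        obtain ⟨hSsub, hSne⟩ := Finset.mem_filter.mp hS
        rw [Finset.mem_powerset] at hSsub
        have hiS : i ∉ S := fun hc => hi (hSsub hc)
        have hc1 : 1 ≤ S.card := Finset.Nonempty.card_pos hSne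
        rw [Finset.card_insert_of_notMem hiS,
          show S.card + 1 - 1 = (S.card - 1) + 1 by omega, pow_succ, mul_neg_one, zpow_neg,
          Finset.gcd_insert, gcd_eq_nat_gcd, ← hua_gcd_finset_gcd S hSne (a i) a]
      rw [Finset.prod_congr rfl hterm, Finset.prod_inv_distrib,
        ← ih hTne a hTpos, ← ih hTne b hbpos, hgcdL, Finset.lcm_insert, lcm_eq_nat_lcm]
      have hkey := hua_lemmaA f hf1 hfmul (a i) L hipos hLpos
      have h1 : f L ≠ 0 := hfne L hLpos
      have h2 : f (Nat.gcd (a i) L) ≠ 0 := hfne _ hgpos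
      field_simp
      linear_combination hkey


/-- Generalized Hua identity (Lemma 2.2): for a multiplicative arithmetic
function `f : ℕ → ℚ` nonvanishing on positive integers and positive integers
`a 1, …, a n` (`n ≥ 1`),
`f (lcm aᵢ) = (∏ f (aᵢ)) * ∏_{S, |S| ≥ 2} f (gcd_{i ∈ S} aᵢ) ^ ((-1)^(|S|-1))`. -/
theorem multiplicative_hua_identity (f : ℕ → ℚ)
    (hf1 : f 1 = 1)
    (hfmul : ∀ m n : ℕ, 0 < m → 0 < n → Nat.Coprime m n → f (m * n) = f m * f n)
    (hfne : ∀ m : ℕ, 0 < m → f m ≠ 0)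
    (n : ℕ) (hn : 1 ≤ n) (a : Fin n → ℕ) (ha : ∀ i, 0 < a i) :
    f (Finset.univ.lcm a) =
      (∏ i, f (a i)) *
        ∏ S ∈ ((Finset.univ : Finset (Fin n)).powerset.filter
            fun S => 2 ≤ S.card),
          f (S.gcd a) ^ ((-1 : ℤ) ^ (S.card - 1)) := by
  have : Nonempty (Fin n) := ⟨⟨0, hn⟩⟩
  have huniv : (Finset.univ : Finset (Fin n)).Nonempty := Finset.univ_nonempty
  rw [hua_general f hf1 hfmul hfne Finset.univ huniv a (fun i _ => ha i)]
  have hsplit : ((Finset.univ : Finset (Fin n)).powerset.filter fun S => S.Nonempty)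
      = ((Finset.univ : Finset (Fin n)).powerset.filter fun S => S.card = 1)
        ∪ ((Finset.univ : Finset (Fin n)).powerset.filter fun S => 2 ≤ S.card) := by
    rw [← Finset.filter_or]
    apply Finset.filter_congr
    intro S _
    rw [← Finset.card_pos]
    omega
  have hdisj : Disjoint ((Finset.univ : Finset (Fin n)).powerset.filter fun S => S.card = 1)
      ((Finset.univ : Finset (Fin n)).powerset.filter fun S => 2 ≤ S.card) := by
    rw [Finset.disjoint_left]
    intro S hS1 hS2
    have h1 := (Finset.mem_filter.mp hS1).2
    have h2 := (Finset.mem_filter.mp hS2).2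
    omega
  rw [hsplit, Finset.prod_union hdisj]
  congr 1
  have himg : ((Finset.univ : Finset (Fin n)).powerset.filter fun S => S.card = 1)
      = Finset.univ.image (fun i : Fin n => {i}) := by
    ext S
    simp [Finset.card_eq_one, eq_comm]
  rw [himg, Finset.prod_image (by intro x _ y _ h; simpa using h)]
  apply Finset.prod_congr rfl
  intro i _
  simp [Finset.gcd_singleton, normalize_eq]
end

section
/- Let f be a multiplicative arithmetic function with rational values such that f(m) ≠ 0 for every positive integer m, let n ≥ 1 be an integer, and let a_1, …, a_n and b_1, …, b_n be positive integers. If gcd(a_i, a_j) = gcd(b_i, b_j) for all 1 ≤ i < j ≤ n, then (∏_{i=1}^{n} f(a_i)) / f(lcm(a_1,…,a_n)) = (∏_{i=1}^{n} f(b_i)) / f(lcm(b_1,…,b_n)). -/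
/-!
Multiplicativity gives `f x * f L = f (gcd x L) * f (lcm x L)`, so adjoining `x` to a family
with lcm `L` multiplies the ratio `(∏ f) / f (lcm)` by `f (gcd x L)`. As `gcd` distributes over
`lcm`, `gcd x L` is the lcm of the `gcd x aᵢ`, hence determined by the pairwise gcds; induction
on the family does the rest.
-/

open Finset

theorem Nat.gcd_lcm_eq_lcm_gcd {k m n : ℕ} (hk : k ≠ 0) (hm : m ≠ 0) (hn : n ≠ 0) :
    gcd k (lcm m n) = lcm (gcd k m) (gcd k n) := by
  apply Nat.eq_of_factorization_eq (gcd_ne_zero_left hk)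
    (lcm_ne_zero (gcd_ne_zero_left hk) (gcd_ne_zero_left hk))
  intro p
  simp only [factorization_gcd hk (lcm_ne_zero hm hn), factorization_lcm hm hn,
    factorization_lcm (gcd_ne_zero_left hk) (gcd_ne_zero_left hk),
    factorization_gcd hk hm, factorization_gcd hk hn, Finsupp.inf_apply, Finsupp.sup_apply]
  exact inf_sup_left _ _ _

theorem Nat.gcd_finset_lcm {ι : Type*} {k : ℕ} (hk : k ≠ 0) {s : Finset ι} {a : ι → ℕ}
    (ha : ∀ i ∈ s, a i ≠ 0) : gcd k (s.lcm a) = s.lcm fun i ↦ gcd k (a i) := by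
  classical
  induction s using Finset.induction_on with
  | empty => simp
  | insert x s hx ih =>
    have ha' : ∀ i ∈ s, a i ≠ 0 := fun i hi ↦ ha i (mem_insert_of_mem hi)
    rw [lcm_insert, lcm_insert, ← ih ha']
    exact gcd_lcm_eq_lcm_gcd hk (ha x (mem_insert_self x s)) (lcm_ne_zero_iff.mpr ha')

theorem apply_gcd_mul_apply_lcm {R : Type*} [CommMonoidWithZero R] {f : ℕ → R} (hf1 : f 1 = 1)
    (hfmul : ∀ m n : ℕ, 0 < m → 0 < n → Nat.Coprime m n → f (m * n) = f m * f n)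
    {m n : ℕ} (hm : m ≠ 0) (hn : n ≠ 0) :
    f (Nat.gcd m n) * f (Nat.lcm m n) = f m * f n := by
  let g : ArithmeticFunction R := ⟨fun k ↦ if k = 0 then 0 else f k, if_pos rfl⟩
  have hg : ∀ k ≠ 0, g k = f k := fun k hk ↦ if_neg hk
  have hg_mul : g.IsMultiplicative := by
    refine ⟨(hg 1 one_ne_zero).trans hf1, fun {x y} hxy ↦ ?_⟩
    rcases eq_or_ne x 0 with rfl | hx
    · simp
    rcases eq_or_ne y 0 with rfl | hy
    · simp
    rw [hg _ (mul_ne_zero hx hy), hg x hx, hg y hy]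
    exact hfmul x y (Nat.pos_of_ne_zero hx) (Nat.pos_of_ne_zero hy) hxy
  rw [← hg _ (Nat.gcd_ne_zero_left hm), ← hg _ (Nat.lcm_ne_zero hm hn), ← hg m hm, ← hg n hn,
    mul_comm, hg_mul.lcm_apply_mul_gcd_apply]

section
variable {K : Type*} [Field K] {f : ℕ → K}
  (hf1 : f 1 = 1)
  (hfmul : ∀ m n : ℕ, 0 < m → 0 < n → Nat.Coprime m n → f (m * n) = f m * f n)
  (hfne : ∀ m : ℕ, 0 < m → f m ≠ 0)
include hf1 hfmul hfne

theorem prod_div_apply_lcm_insert {ι : Type*} [DecidableEq ι] {s : Finset ι} {x : ι}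
    (hx : x ∉ s) {a : ι → ℕ} (ha : ∀ i ∈ insert x s, a i ≠ 0) :
    (∏ i ∈ insert x s, f (a i)) / f ((insert x s).lcm a) =
      f (Nat.gcd (a x) (s.lcm a)) * ((∏ i ∈ s, f (a i)) / f (s.lcm a)) := by
  have hax : a x ≠ 0 := ha x (mem_insert_self x s)
  have hL : s.lcm a ≠ 0 := lcm_ne_zero_iff.mpr fun i hi ↦ ha i (mem_insert_of_mem hi)
  have h := apply_gcd_mul_apply_lcm hf1 hfmul hax hL
  rw [prod_insert hx, lcm_insert, lcm_eq_nat_lcm, mul_div_assoc',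
    div_eq_div_iff (hfne _ (Nat.pos_of_ne_zero (Nat.lcm_ne_zero hax hL)))
      (hfne _ (Nat.pos_of_ne_zero hL))]
  linear_combination -(∏ i ∈ s, f (a i)) * h

theorem prod_div_apply_lcm_eq_of_pairwise_gcd_eq {ι : Type*} (s : Finset ι) {a b : ι → ℕ}
    (ha : ∀ i ∈ s, a i ≠ 0) (hb : ∀ i ∈ s, b i ≠ 0)
    (hgcd : (s : Set ι).Pairwise fun i j ↦ Nat.gcd (a i) (a j) = Nat.gcd (b i) (b j)) :
    (∏ i ∈ s, f (a i)) / f (s.lcm a) = (∏ i ∈ s, f (b i)) / f (s.lcm b) := by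
  classical
  induction s using Finset.induction_on with
  | empty => simp
  | insert x s hx ih =>
    have ha' : ∀ i ∈ s, a i ≠ 0 := fun i hi ↦ ha i (mem_insert_of_mem hi)
    have hb' : ∀ i ∈ s, b i ≠ 0 := fun i hi ↦ hb i (mem_insert_of_mem hi)
    have hgcd_lcm : Nat.gcd (a x) (s.lcm a) = Nat.gcd (b x) (s.lcm b) := by
      rw [Nat.gcd_finset_lcm (ha x (mem_insert_self x s)) ha',
        Nat.gcd_finset_lcm (hb x (mem_insert_self x s)) hb']
      exact lcm_congr rfl fun i hi ↦
        hgcd (mem_insert_self x s) (mem_insert_of_mem hi) (ne_of_mem_of_not_mem hi hx).symm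
    rw [prod_div_apply_lcm_insert hf1 hfmul hfne hx ha,
      prod_div_apply_lcm_insert hf1 hfmul hfne hx hb, hgcd_lcm,
      ih ha' hb' (hgcd.mono (coe_subset.mpr (subset_insert x s)))]

end

theorem multiplicative_ratio_eq_of_pairwise_gcd_eq_general (f : ℕ → ℚ)
    (hf1 : f 1 = 1)
    (hfmul : ∀ m n : ℕ, 0 < m → 0 < n → Nat.Coprime m n → f (m * n) = f m * f n)
    (hfne : ∀ m : ℕ, 0 < m → f m ≠ 0)
    (n : ℕ) (a b : Fin n → ℕ)
    (ha : ∀ i, 0 < a i) (hb : ∀ i, 0 < b i)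
    (hgcd : ∀ i j : Fin n, i < j → Nat.gcd (a i) (a j) = Nat.gcd (b i) (b j)) :
    (∏ i, f (a i)) / f (Finset.univ.lcm a) =
      (∏ i, f (b i)) / f (Finset.univ.lcm b) := by
  refine prod_div_apply_lcm_eq_of_pairwise_gcd_eq hf1 hfmul hfne univ
    (fun i _ ↦ (ha i).ne') (fun i _ ↦ (hb i).ne') fun i _ j _ hij ↦ ?_
  rcases hij.lt_or_gt with h | h
  · exact hgcd i j h
  · rw [Nat.gcd_comm (a i), Nat.gcd_comm (b i)]
    exact hgcd j i h

/-- Lemma 2.3: if `f` is a multiplicative arithmetic function, nonvanishing on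
positive integers, and `gcd (a i) (a j) = gcd (b i) (b j)` for all `i < j`,
then `(∏ f (a i)) / f (lcm a i) = (∏ f (b i)) / f (lcm b i)`. -/
theorem multiplicative_ratio_eq_of_pairwise_gcd_eq (f : ℕ → ℚ)
    (hf1 : f 1 = 1)
    (hfmul : ∀ m n : ℕ, 0 < m → 0 < n → Nat.Coprime m n → f (m * n) = f m * f n)
    (hfne : ∀ m : ℕ, 0 < m → f m ≠ 0)
    (n : ℕ) (hn : 1 ≤ n) (a b : Fin n → ℕ)
    (ha : ∀ i, 0 < a i) (hb : ∀ i, 0 < b i)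
    (hgcd : ∀ i j : Fin n, i < j → Nat.gcd (a i) (a j) = Nat.gcd (b i) (b j)) :
    (∏ i, f (a i)) / f (Finset.univ.lcm a) =
      (∏ i, f (b i)) / f (Finset.univ.lcm b) :=
  multiplicative_ratio_eq_of_pairwise_gcd_eq_general f hf1 hfmul hfne n a b ha hb hgcd
end

section
/- Let k ≥ 1, a ≥ 1, b ≥ 0 and c ≥ 1 be integers, and let f be a multiplicative arithmetic function with rational values such that f(m) ≠ 0 for every positive integer m. Then the arithmetic function g_{k,f} is periodic and c·L_k is a period of g_{k,f}, i.e., g_{k,f}(n + c·L_k) = g_{k,f}(n) for every positive integer n. -/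
/-!
Work one prime `p` at a time, writing `xᵢ = b + a (n + i c)` and `M = a c L_k`, so that
`g(n + c L_k)` is the same expression evaluated at the terms `xᵢ + M`. Let `m = v_p(M)`.
Adding `M` does not change `min (v_p xᵢ) m`, and at most one term of the progression has
`v_p xᵢ > m`: otherwise `p^(m+1)` would divide a difference `a c (i - j)`, which divides `M`.
When at most one exponent exceeds `m`, the `p`-part `∏ᵢ f(p^eᵢ) / f(p^(max eᵢ))` only depends on
the truncated exponents `min eᵢ m`, hence it is the same before and after the shift.
-/

/-- `L k = lcm (1, 2, …, k)`. -/
def Lk (k : ℕ) : ℕ := (Finset.Icc 1 k).lcm id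

open Finset

section Truncation

variable {ι K : Type*} [CommGroupWithZero K]

theorem prod_div_sup_min_eq {F : ℕ → K} (hF : ∀ e, F e ≠ 0) {s : Finset ι} {e : ι → ℕ}
    {m : ℕ} (he : ∀ i ∈ s, ∀ j ∈ s, m < e i → m < e j → i = j) :
    (∏ i ∈ s, F (min (e i) m)) / F (s.sup fun i => min (e i) m) =
      (∏ i ∈ s, F (e i)) / F (s.sup e) := by
  classical
  by_cases hbig : ∃ i ∈ s, m < e i
  · obtain ⟨i₀, hi₀, hm⟩ := hbig
    have hle : ∀ i ∈ s.erase i₀, e i ≤ m := fun i hi =>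
      not_lt.1 fun hlt => (mem_erase.1 hi).1 (he i (mem_of_mem_erase hi) i₀ hi₀ hlt hm)
    have hsup : s.sup e = e i₀ := by
      refine le_antisymm (Finset.sup_le fun i hi => ?_) (le_sup hi₀)
      rcases eq_or_ne i i₀ with rfl | hne
      · exact le_rfl
      · exact (hle i (mem_erase.2 ⟨hne, hi⟩)).trans hm.le
    have hsup_min : (s.sup fun i => min (e i) m) = m :=
      le_antisymm (Finset.sup_le fun _ _ => min_le_right _ _)
        ((min_eq_right hm.le).symm.trans_le (le_sup (f := fun i => min (e i) m) hi₀))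
    rw [hsup, hsup_min, ← mul_prod_erase s _ hi₀, ← mul_prod_erase s _ hi₀, min_eq_right hm.le,
      prod_congr rfl fun i hi => by rw [min_eq_left (hle i hi)],
      mul_div_cancel_left₀ _ (hF _), mul_div_cancel_left₀ _ (hF _)]
  · push Not at hbig
    have hmin : ∀ i ∈ s, min (e i) m = e i := fun i hi => min_eq_left (hbig i hi)
    rw [prod_congr rfl fun i hi => by rw [hmin i hi], sup_congr rfl hmin]

end Truncation

section Valuations

variable {ι : Type*} {p M : ℕ}

theorem min_factorization_add (hp : p.Prime) {x : ℕ} (hx : x ≠ 0) :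
    min ((x + M).factorization p) (M.factorization p) =
      min (x.factorization p) (M.factorization p) := by
  refine eq_of_forall_le_iff fun j => ?_
  simp only [le_min_iff]
  refine and_congr_left fun hj => ?_
  have hpM : p ^ j ∣ M := (pow_dvd_pow p hj).trans (Nat.ordProj_dvd M p)
  rw [← hp.pow_dvd_iff_le_factorization (by omega), ← hp.pow_dvd_iff_le_factorization hx,
    Nat.dvd_add_left hpM]

theorem eq_of_factorization_lt_of_sub_dvd (hp : p.Prime) (hM : M ≠ 0) {s : Finset ι}
    {y : ι → ℕ} (hy : ∀ i ∈ s, y i ≠ 0) (hyM : ∀ i ∈ s, ∀ j ∈ s, i ≠ j → (y i : ℤ) - y j ∣ M) :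
    ∀ i ∈ s, ∀ j ∈ s, M.factorization p < (y i).factorization p →
      M.factorization p < (y j).factorization p → i = j := by
  intro i hi j hj hlt_i hlt_j
  by_contra hij
  have hdvd : ∀ l ∈ s, M.factorization p < (y l).factorization p →
      ((p ^ (M.factorization p + 1) : ℕ) : ℤ) ∣ y l := fun l hl hlt =>
    Int.natCast_dvd_natCast.2 ((hp.pow_dvd_iff_le_factorization (hy l hl)).2 hlt)
  exact Nat.pow_succ_factorization_not_dvd hM hp <| Int.natCast_dvd_natCast.1 <|
    (dvd_sub (hdvd i hi hlt_i) (hdvd j hj hlt_j)).trans (hyM i hi j hj hij)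

theorem prod_div_sup_factorization_add_eq {K : Type*} [CommGroupWithZero K] (hp : p.Prime)
    {F : ℕ → K} (hF : ∀ e, F e ≠ 0) {s : Finset ι} {x : ι → ℕ} (hx : ∀ i ∈ s, x i ≠ 0)
    (hxM : ∀ i ∈ s, ∀ j ∈ s, i ≠ j → (x i : ℤ) - x j ∣ M) :
    (∏ i ∈ s, F ((x i + M).factorization p)) / F (s.sup fun i => (x i + M).factorization p) =
      (∏ i ∈ s, F ((x i).factorization p)) / F (s.sup fun i => (x i).factorization p) := by
  rcases eq_or_ne M 0 with rfl | hM
  · simp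
  have hxM' : ∀ i ∈ s, ∀ j ∈ s, i ≠ j → ((x i + M : ℕ) : ℤ) - (x j + M : ℕ) ∣ M :=
    fun i hi j hj hij => by
      simpa only [Nat.cast_add, add_sub_add_right_eq_sub] using hxM i hi j hj hij
  rw [← prod_div_sup_min_eq hF (eq_of_factorization_lt_of_sub_dvd hp hM hx hxM),
    ← prod_div_sup_min_eq hF (eq_of_factorization_lt_of_sub_dvd hp hM
      (fun i hi => by have := hx i hi; omega) hxM'),
    prod_congr rfl fun i hi => by rw [min_factorization_add hp (hx i hi)],
    sup_congr rfl fun i hi => min_factorization_add hp (hx i hi)]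

end Valuations

section Multiplicative

variable {ι : Type*}

theorem map_mul_of_coprime {R : Type*} [MulOneClass R] {f : ℕ → R} (hf1 : f 1 = 1)
    (hfmul : ∀ m n : ℕ, 0 < m → 0 < n → Nat.Coprime m n → f (m * n) = f m * f n)
    (m n : ℕ) (hmn : Nat.Coprime m n) : f (m * n) = f m * f n := by
  rcases Nat.eq_zero_or_pos m with rfl | hm
  · rw [(Nat.coprime_zero_left n).1 hmn, mul_one, hf1, mul_one]
  rcases Nat.eq_zero_or_pos n with rfl | hn
  · rw [(Nat.coprime_zero_right m).1 hmn, one_mul, hf1, one_mul]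
  exact hfmul m n hm hn hmn

theorem eq_prod_primeFactors_of_dvd {R : Type*} [CommMonoid R] {f : ℕ → R} (hf1 : f 1 = 1)
    (hfmul : ∀ m n : ℕ, 0 < m → 0 < n → Nat.Coprime m n → f (m * n) = f m * f n)
    {P y : ℕ} (hP : P ≠ 0) (hy : y ∣ P) :
    f y = ∏ p ∈ P.primeFactors, f (p ^ y.factorization p) := by
  rw [Nat.multiplicative_factorization f (map_mul_of_coprime hf1 hfmul) hf1
    (ne_zero_of_dvd_ne_zero hP hy), Finsupp.prod, Nat.support_factorization]
  refine prod_subset (Nat.primeFactors_mono hy hP) fun p _ hp => ?_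
  rw [← Nat.support_factorization, Finsupp.notMem_support_iff] at hp
  rw [hp, pow_zero, hf1]

theorem prod_div_lcm_eq_prod_primeFactors {G : Type*} [DivisionCommMonoid G] {f : ℕ → G}
    (hf1 : f 1 = 1)
    (hfmul : ∀ m n : ℕ, 0 < m → 0 < n → Nat.Coprime m n → f (m * n) = f m * f n)
    {P : ℕ} (hP : P ≠ 0) {s : Finset ι} {x : ι → ℕ} (hx : ∀ i ∈ s, x i ∣ P) :
    (∏ i ∈ s, f (x i)) / f (s.lcm x) = ∏ p ∈ P.primeFactors,
      (∏ i ∈ s, f (p ^ (x i).factorization p)) / f (p ^ s.sup fun i => (x i).factorization p) := by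
  have hx0 : ∀ i ∈ s, x i ≠ 0 := fun i hi => ne_zero_of_dvd_ne_zero hP (hx i hi)
  rw [prod_div_distrib, eq_prod_primeFactors_of_dvd hf1 hfmul hP (Finset.lcm_dvd hx),
    prod_congr rfl fun i hi => eq_prod_primeFactors_of_dvd hf1 hfmul hP (hx i hi), prod_comm]
  simp only [Finset.factorization_lcm hx0]

theorem prod_div_lcm_add_eq {G : Type*} [CommGroupWithZero G] {f : ℕ → G} (hf1 : f 1 = 1)
    (hfmul : ∀ m n : ℕ, 0 < m → 0 < n → Nat.Coprime m n → f (m * n) = f m * f n)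
    (hfne : ∀ m : ℕ, 0 < m → f m ≠ 0) {s : Finset ι} {x : ι → ℕ} {M : ℕ}
    (hx : ∀ i ∈ s, x i ≠ 0) (hxM : ∀ i ∈ s, ∀ j ∈ s, i ≠ j → (x i : ℤ) - x j ∣ M) :
    (∏ i ∈ s, f (x i + M)) / f (s.lcm fun i => x i + M) = (∏ i ∈ s, f (x i)) / f (s.lcm x) := by
  have hP : (∏ i ∈ s, x i) * ∏ i ∈ s, (x i + M) ≠ 0 :=
    mul_ne_zero (prod_ne_zero_iff.2 hx) (prod_ne_zero_iff.2 fun i hi => by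
      have := hx i hi; omega)
  rw [prod_div_lcm_eq_prod_primeFactors hf1 hfmul hP
      fun i hi => dvd_mul_of_dvd_right (dvd_prod_of_mem _ hi) _,
    prod_div_lcm_eq_prod_primeFactors hf1 hfmul hP
      fun i hi => dvd_mul_of_dvd_left (dvd_prod_of_mem _ hi) _]
  refine prod_congr rfl fun p hp => ?_
  have hp : p.Prime := Nat.prime_of_mem_primeFactors hp
  exact prod_div_sup_factorization_add_eq hp (fun e => hfne _ (pow_pos hp.pos e)) hx hxM

end Multiplicative

theorem sub_dvd_Lk {i j k : ℕ} (hi : i ≤ k) (hj : j ≤ k) (hij : i ≠ j) :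
    (i - j : ℤ) ∣ Lk k := by
  have hmem : ((i : ℤ) - j).natAbs ∈ Icc 1 k := mem_Icc.2 (by grind)
  rw [← Int.natAbs_dvd_natAbs, Int.natAbs_natCast]
  exact Finset.dvd_lcm (f := id) hmem

theorem gkf_periodic_cLk_general (k a b c : ℕ) (ha : 1 ≤ a)
    (f : ℕ → ℚ) (hf1 : f 1 = 1)
    (hfmul : ∀ m n : ℕ, 0 < m → 0 < n → Nat.Coprime m n → f (m * n) = f m * f n)
    (hfne : ∀ m : ℕ, 0 < m → f m ≠ 0)
    (g : ℕ → ℚ)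
    (hg : ∀ n : ℕ, g n =
      (∏ i ∈ Finset.range (k + 1), f (b + a * (n + i * c))) /
        f ((Finset.range (k + 1)).lcm fun i => b + a * (n + i * c))) :
    ∀ n : ℕ, 0 < n → g (n + c * Lk k) = g n := by
  intro n hn
  have hshift : ∀ i : ℕ, b + a * (n + c * Lk k + i * c) = b + a * (n + i * c) + a * c * Lk k :=
    fun i => by ring
  have hdiff : ∀ i j : ℕ, ((b + a * (n + i * c) : ℕ) : ℤ) - (b + a * (n + j * c) : ℕ) =
      a * c * (i - j) := fun i j => by push_cast; ring
  rw [hg, hg]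
  simp only [hshift]
  refine prod_div_lcm_add_eq (x := fun i => b + a * (n + i * c)) hf1 hfmul hfne
    (fun i _ => by positivity) fun i hi j hj hij => ?_
  rw [hdiff, Nat.cast_mul (a * c)]
  exact mul_dvd_mul_left _ (sub_dvd_Lk (mem_range_succ_iff.1 hi) (mem_range_succ_iff.1 hj) hij)

/-- Theorem 1.2: for integers `k ≥ 1`, `a ≥ 1`, `b ≥ 0`, `c ≥ 1` and a
multiplicative arithmetic function `f : ℕ → ℚ` nonvanishing on positive
integers, the function
`g (n) = (∏_{i=0}^{k} f (b + a (n + i c))) / f (lcm_{0 ≤ i ≤ k} (b + a (n + i c)))`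
is periodic, with `c * L k` as a period. -/
theorem gkf_periodic_cLk (k a b c : ℕ) (hk : 1 ≤ k) (ha : 1 ≤ a) (hc : 1 ≤ c)
    (f : ℕ → ℚ) (hf1 : f 1 = 1)
    (hfmul : ∀ m n : ℕ, 0 < m → 0 < n → Nat.Coprime m n → f (m * n) = f m * f n)
    (hfne : ∀ m : ℕ, 0 < m → f m ≠ 0)
    (g : ℕ → ℚ)
    (hg : ∀ n : ℕ, g n =
      (∏ i ∈ Finset.range (k + 1), f (b + a * (n + i * c))) /
        f ((Finset.range (k + 1)).lcm fun i => b + a * (n + i * c))) :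
    ∀ n : ℕ, 0 < n → g (n + c * Lk k) = g n :=
  gkf_periodic_cLk_general k a b c ha f hf1 hfmul hfne g hg
end

section
/- Let F be an arithmetic function taking positive rational values, and for each prime p define F_p(n) := v_p(F(n)) for positive integers n. Then F is periodic if and only if F_p is periodic for every prime p and F_p has smallest period 1 for all but finitely many primes p. Moreover, if F is periodic, then the smallest period of F equals the least common multiple over all primes p of the smallest period T_{p,F} of F_p. -/
section helpers

lemma padicValRat_def' (p : ℕ) (q : ℚ) :
    padicValRat p q = (padicValNat p q.num.natAbs : ℤ) - padicValNat p q.den := rfl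

lemma rat_eq_of_val (q r : ℚ) (hq : 0 < q) (hr : 0 < r)
    (h : ∀ p : ℕ, p.Prime → padicValRat p q = padicValRat p r) : q = r := by
  have hqn : q.num.natAbs ≠ 0 := Int.natAbs_ne_zero.mpr (Rat.num_pos.mpr hq).ne'
  have hrn : r.num.natAbs ≠ 0 := Int.natAbs_ne_zero.mpr (Rat.num_pos.mpr hr).ne'
  have hqd : q.den ≠ 0 := q.den_nz
  have hrd : r.den ≠ 0 := r.den_nz
  have key : q.num.natAbs * r.den = r.num.natAbs * q.den := by
    rw [Nat.eq_iff_prime_padicValNat_eq _ _ (by positivity) (by positivity)]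
    intro p hp
    haveI : Fact p.Prime := ⟨hp⟩
    have := h p hp
    rw [padicValRat_def', padicValRat_def'] at this
    rw [padicValNat.mul hqn hrd, padicValNat.mul hrn hqd]
    omega
  have key2 : (q.num : ℚ) * r.den = (r.num : ℚ) * q.den := by
    have hq' := Int.natAbs_of_nonneg (Rat.num_pos.mpr hq).le
    have hr' := Int.natAbs_of_nonneg (Rat.num_pos.mpr hr).le
    have keyZ : q.num * (r.den : ℤ) = r.num * (q.den : ℤ) := by
      rw [← hq', ← hr']; exact_mod_cast key
    exact_mod_cast keyZ
  rw [← Rat.num_div_den q, ← Rat.num_div_den r,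
    div_eq_div_iff (by exact_mod_cast hqd) (by exact_mod_cast hrd)]
  exact key2

lemma period_mul {α : Type*} (G : ℕ → α) {T : ℕ}
    (h : ∀ n, 0 < n → G (n + T) = G n) (k : ℕ) :
    ∀ n, 0 < n → G (n + T * k) = G n := by
  induction k with
  | zero => simp
  | succ k ih =>
    intro n hn
    have h1 : n + T * (k + 1) = (n + T * k) + T := by ring
    rw [h1, h (n + T * k) (by omega), ih n hn]

lemma period_dvd {α : Type*} (G : ℕ → α) {T L : ℕ}
    (h : ∀ n, 0 < n → G (n + T) = G n) (hd : T ∣ L) :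
    ∀ n, 0 < n → G (n + L) = G n := by
  obtain ⟨k, rfl⟩ := hd
  exact period_mul G h k

lemma least_period_dvd {α : Type*} (G : ℕ → α) {T₀ T : ℕ}
    (h₀ : IsLeast {T : ℕ | 0 < T ∧ ∀ n, 0 < n → G (n + T) = G n} T₀)
    (hT : 0 < T) (hper : ∀ n, 0 < n → G (n + T) = G n) : T₀ ∣ T := by
  obtain ⟨⟨hT₀pos, hT₀per⟩, hlb⟩ := h₀
  by_cases hr : T % T₀ = 0
  · exact Nat.dvd_of_mod_eq_zero hr
  · exfalso
    have hrper : ∀ n, 0 < n → G (n + T % T₀) = G n := by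
      intro n hn
      have h1 : G (n + T % T₀ + T₀ * (T / T₀)) = G (n + T % T₀) :=
        period_dvd G hT₀per ⟨T / T₀, rfl⟩ (n + T % T₀) (by omega)
      have h2 : n + T % T₀ + T₀ * (T / T₀) = n + T := by
        have := Nat.div_add_mod T T₀; omega
      rw [h2] at h1
      rw [← h1, hper n hn]
    have hle := hlb ⟨Nat.pos_of_ne_zero hr, hrper⟩
    have hlt : T % T₀ < T₀ := Nat.mod_lt _ hT₀pos
    omega

lemma finite_val_ne (q : ℚ) (hq : q ≠ 0) :
    {p : ℕ | p.Prime ∧ padicValRat p q ≠ 0}.Finite := by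
  apply Set.Finite.subset (q.num.natAbs * q.den).primeFactors.finite_toSet
  rintro p ⟨hp, hval⟩
  have hqn : q.num.natAbs ≠ 0 := Int.natAbs_ne_zero.mpr (Rat.num_ne_zero.mpr hq)
  have hqd : q.den ≠ 0 := q.den_nz
  simp only [Finset.coe_sort_coe, Finset.mem_coe, Nat.mem_primeFactors]
  refine ⟨hp, ?_, by positivity⟩
  by_contra hnd
  have h1 : ¬ p ∣ q.num.natAbs := fun h => hnd (h.mul_right _)
  have h2 : ¬ p ∣ q.den := fun h => hnd (h.mul_left _)
  rw [padicValRat_def', padicValNat.eq_zero_of_not_dvd h1,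
    padicValNat.eq_zero_of_not_dvd h2] at hval
  simp at hval

lemma not_isLeast_one_iff (P : ℕ → Prop) :
    ¬ IsLeast {T : ℕ | 0 < T ∧ P T} 1 ↔ ¬ P 1 := by
  constructor
  · intro h hP; exact h ⟨⟨one_pos, hP⟩, fun T hT => hT.1⟩
  · intro h hL; exact h hL.1.2

end helpers

/-- Lemma 3.2: for an arithmetic function `F` with positive rational values,
`F` is periodic iff each `F_p (n) = v_p (F n)` is periodic and all but finitely
many `F_p` have smallest period `1`.  Moreover, if `F` is periodic then the
smallest period of `F` is the lcm over all primes of the smallest periods of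
the `F_p` (computed as the lcm over any finite set of primes containing all
primes whose `F_p` has smallest period `≠ 1`). -/
theorem periodic_iff_padic_components_periodic (F : ℕ → ℚ)
    (hFpos : ∀ n : ℕ, 0 < n → 0 < F n) :
    ((∃ T : ℕ, 0 < T ∧ ∀ n : ℕ, 0 < n → F (n + T) = F n) ↔
      ((∀ p : ℕ, p.Prime → ∃ T : ℕ, 0 < T ∧ ∀ n : ℕ, 0 < n →
          padicValRat p (F (n + T)) = padicValRat p (F n)) ∧
        {p : ℕ | p.Prime ∧ ¬ IsLeast {T : ℕ | 0 < T ∧ ∀ n : ℕ, 0 < n →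
            padicValRat p (F (n + T)) = padicValRat p (F n)} 1}.Finite)) ∧
    (∀ T₀ : ℕ,
      IsLeast {T : ℕ | 0 < T ∧ ∀ n : ℕ, 0 < n → F (n + T) = F n} T₀ →
      ∀ Tp : ℕ → ℕ,
        (∀ p : ℕ, p.Prime →
          IsLeast {T : ℕ | 0 < T ∧ ∀ n : ℕ, 0 < n →
            padicValRat p (F (n + T)) = padicValRat p (F n)} (Tp p)) →
        ∀ S : Finset ℕ, (∀ p ∈ S, p.Prime) →
          (∀ p : ℕ, p.Prime → Tp p ≠ 1 → p ∈ S) →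
          T₀ = S.lcm Tp) := by
  have hFne : ∀ n : ℕ, 0 < n → F n ≠ 0 := fun n hn => (hFpos n hn).ne'
  constructor
  · constructor
    · rintro ⟨T, hTpos, hper⟩
      constructor
      · intro p hp
        exact ⟨T, hTpos, fun n hn => by rw [hper n hn]⟩
      · -- finiteness of the "bad" primes
        apply Set.Finite.subset
          (Set.Finite.biUnion (Finset.Icc 1 T).finite_toSet
            (fun m (hm : m ∈ (Finset.Icc 1 T : Finset ℕ)) =>
              finite_val_ne (F m) (hFne m (by
                simp only [Finset.mem_Icc] at hm; omega))))
        rintro p ⟨hp, hbad⟩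
        rw [not_isLeast_one_iff] at hbad
        push_neg at hbad
        obtain ⟨n, hn, hne⟩ := hbad
        -- at least one of F n, F (n+1) has nonzero valuation at p
        have hkey : ∃ m : ℕ, 0 < m ∧ padicValRat p (F m) ≠ 0 := by
          by_cases h1 : padicValRat p (F n) = 0
          · exact ⟨n + 1, by omega, by rw [h1] at hne; exact hne⟩
          · exact ⟨n, hn, h1⟩
        obtain ⟨m, hm, hmne⟩ := hkey
        -- reduce m modulo T into [1, T]
        set m' : ℕ := (m - 1) % T + 1 with hm'def
        have hmeq : m' + T * ((m - 1) / T) = m := by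
          have := Nat.div_add_mod (m - 1) T; omega
        have hFm : F m = F m' := by
          rw [← hmeq]
          exact period_mul F hper ((m - 1) / T) m' (by omega)
        have hm'mem : m' ∈ Finset.Icc 1 T := by
          simp only [Finset.mem_Icc]
          have : (m - 1) % T < T := Nat.mod_lt _ hTpos
          omega
        exact Set.mem_biUnion hm'mem ⟨hp, by rw [← hFm]; exact hmne⟩
    · rintro ⟨hall, hfin⟩
      classical
      set bad := hfin.toFinset with hbaddef
      set Tf : ℕ → ℕ := fun p => if h : p.Prime then (hall p h).choose else 1 with hTfdef
      have hTfpos : ∀ p : ℕ, 0 < Tf p := by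
        intro p
        by_cases h : p.Prime
        · simp only [hTfdef, dif_pos h]; exact (hall p h).choose_spec.1
        · simp [hTfdef, dif_neg h]
      have hTfper : ∀ p : ℕ, (h : p.Prime) → ∀ n, 0 < n →
          padicValRat p (F (n + Tf p)) = padicValRat p (F n) := by
        intro p h n hn
        simp only [hTfdef, dif_pos h]
        exact (hall p h).choose_spec.2 n hn
      refine ⟨∏ p ∈ bad, Tf p, Finset.prod_pos (fun p _ => hTfpos p), ?_⟩
      intro n hn
      apply rat_eq_of_val _ _ (hFpos _ (by omega)) (hFpos n hn)
      intro p hp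
      by_cases hmem : p ∈ bad
      · exact period_dvd (fun k => padicValRat p (F k)) (hTfper p hp)
          (Finset.dvd_prod_of_mem Tf hmem) n hn
      · have h1 : IsLeast {T : ℕ | 0 < T ∧ ∀ n : ℕ, 0 < n →
            padicValRat p (F (n + T)) = padicValRat p (F n)} 1 := by
          by_contra hc
          exact hmem (hfin.mem_toFinset.mpr ⟨hp, hc⟩)
        exact period_dvd (fun k => padicValRat p (F k)) h1.1.2
          (one_dvd _) n hn
  · intro T₀ hT₀ Tp hTp S hSprime hScover
    have hT₀pos : 0 < T₀ := hT₀.1.1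
    have hT₀per := hT₀.1.2
    -- every component least period divides T₀
    have hdvd : ∀ p : ℕ, p.Prime → Tp p ∣ T₀ := by
      intro p hp
      exact least_period_dvd (fun k => padicValRat p (F k)) (hTp p hp) hT₀pos
        (fun n hn => congrArg (padicValRat p) (hT₀per n hn))
    have h1 : S.lcm Tp ∣ T₀ := Finset.lcm_dvd (fun p hps => hdvd p (hSprime p hps))
    have hLpos : 0 < S.lcm Tp := by
      rcases Nat.eq_zero_or_pos (S.lcm Tp) with h | h
      · rw [h] at h1; omega
      · exact h
    -- S.lcm Tp is a period of F
    have hLper : ∀ n : ℕ, 0 < n → F (n + S.lcm Tp) = F n := by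
      intro n hn
      apply rat_eq_of_val _ _ (hFpos _ (by omega)) (hFpos n hn)
      intro p hp
      have hpd : Tp p ∣ S.lcm Tp := by
        by_cases hmem : p ∈ S
        · exact Finset.dvd_lcm hmem
        · have : Tp p = 1 := by
            by_contra hne
            exact hmem (hScover p hp hne)
          rw [this]; exact one_dvd _
      exact period_dvd (fun k => padicValRat p (F k)) ((hTp p hp).1.2) hpd n hn
    have hle : T₀ ≤ S.lcm Tp := hT₀.2 ⟨hLpos, hLper⟩
    have hge : S.lcm Tp ≤ T₀ := Nat.le_of_dvd hT₀pos h1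
    omega
end

section
/- Let k ≥ 1, a ≥ 1, b ≥ 0 and c ≥ 1 be integers, d := gcd(a, b). For every prime p with p ≥ c·L_k + 1 and every positive integer n, v_p(g_{k,φ}(n)) = k·v_p(φ(d)); in particular the function n ↦ v_p(g_{k,φ}(n)) is constant (has smallest period 1). -/
/-- `g_{k,φ} (n) = (∏_{i=0}^{k} φ (b + a (n + i c))) / φ (lcm_{0 ≤ i ≤ k} (b + a (n + i c)))`. -/
def gkphi (k a b c n : ℕ) : ℚ :=
  (∏ i ∈ Finset.range (k + 1), ((b + a * (n + i * c)).totient : ℚ)) /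
    (((Finset.range (k + 1)).lcm fun i => b + a * (n + i * c)).totient : ℚ)


open Finset

lemma aux_finsetLcm_ne_zero {ι : Type*} {s : Finset ι} {f : ι → ℕ}
    (h : ∀ i ∈ s, f i ≠ 0) : s.lcm f ≠ 0 := by
  rw [Ne, Finset.lcm_eq_zero_iff]
  rintro ⟨i, hi, h0⟩
  exact h i hi h0

lemma aux_pow_dvd_lcm {p e : ℕ} (hp : p.Prime) {ι : Type*} {s : Finset ι} {f : ι → ℕ}
    (h0 : ∀ i ∈ s, f i ≠ 0) (hdvd : p ^ e ∣ s.lcm f) : e = 0 ∨ ∃ i ∈ s, p ^ e ∣ f i := by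
  classical
  induction s using Finset.induction_on with
  | empty =>
    left
    simp only [Finset.lcm_empty, Nat.dvd_one] at hdvd
    by_contra h
    exact absurd hdvd (Nat.one_lt_pow h hp.one_lt).ne'
  | @insert x s hx ih =>
    rw [Finset.lcm_insert, lcm_eq_nat_lcm] at hdvd
    have hs0 : s.lcm f ≠ 0 := aux_finsetLcm_ne_zero (fun i hi => h0 i (mem_insert_of_mem hi))
    have hx0 : f x ≠ 0 := h0 x (mem_insert_self x s)
    have hle := (hp.pow_dvd_iff_le_factorization (Nat.lcm_ne_zero hx0 hs0)).mp hdvd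
    rw [Nat.factorization_lcm hx0 hs0, Finsupp.sup_apply, le_sup_iff] at hle
    rcases hle with hle | hle
    · exact Or.inr ⟨x, mem_insert_self x s, (hp.pow_dvd_iff_le_factorization hx0).mpr hle⟩
    · rcases ih (fun i hi => h0 i (mem_insert_of_mem hi))
        ((hp.pow_dvd_iff_le_factorization hs0).mpr hle) with h | ⟨i, hi, hd⟩
      · exact Or.inl h
      · exact Or.inr ⟨i, mem_insert_of_mem hi, hd⟩

lemma aux_totient_mul_of_dvd : ∀ (g : ℕ) {l : ℕ}, g ∣ l → 0 < l → (g * l).totient = g * l.totient := by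
  intro g
  induction g using Nat.strong_induction_on with
  | _ g ih =>
    intro l hgl hl
    rcases eq_or_ne g 1 with rfl | hg1
    · simp
    have hg0 : g ≠ 0 := by rintro rfl; exact absurd (Nat.eq_zero_of_zero_dvd hgl) hl.ne'
    have hq : g.minFac.Prime := Nat.minFac_prime hg1
    obtain ⟨g', hgq⟩ := Nat.minFac_dvd g
    have hg'g : g' ∣ g := Dvd.intro_left _ hgq.symm
    have hg'l : g' ∣ l := hg'g.trans hgl
    have hql : g.minFac ∣ l := (Nat.minFac_dvd g).trans hgl
    have hg'lt : g' < g := by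
      have hq2 : 2 ≤ g.minFac := hq.two_le
      have hg'0 : g' ≠ 0 := by rintro rfl; rw [mul_zero] at hgq; exact hg0 hgq
      nlinarith [Nat.pos_of_ne_zero hg'0]
    rw [hgq, mul_assoc,
      Nat.totient_mul_of_prime_of_dvd hq (Dvd.dvd.mul_left hql g'),
      ih g' hg'lt hg'l hl, mul_assoc]

lemma aux_totient_gcd_mul_totient_lcm {m n : ℕ} (hm : 0 < m) (hn : 0 < n) :
    (Nat.gcd m n).totient * (Nat.lcm m n).totient = m.totient * n.totient := by
  have hg : 0 < Nat.gcd m n := Nat.gcd_pos_of_pos_left n hm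
  have hl : 0 < Nat.lcm m n := Nat.pos_of_ne_zero (Nat.lcm_ne_zero hm.ne' hn.ne')
  have hgl : Nat.gcd m n ∣ Nat.lcm m n := dvd_trans (Nat.gcd_dvd_left m n) (Nat.dvd_lcm_left m n)
  have key := Nat.totient_gcd_mul_totient_mul m n
  rw [← Nat.gcd_mul_lcm m n, aux_totient_mul_of_dvd _ hgl hl] at key
  apply Nat.eq_of_mul_eq_mul_right hg
  calc (Nat.gcd m n).totient * (Nat.lcm m n).totient * Nat.gcd m n
      = (Nat.gcd m n).totient * (Nat.gcd m n * (Nat.lcm m n).totient) := by ring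
    _ = m.totient * n.totient * Nat.gcd m n := key

lemma aux_vphi {p : ℕ} (hp : p.Prime) :
    ∀ (G : ℕ) {d : ℕ}, 0 < G → 0 < d → d ∣ G →
      (∀ q : ℕ, q.Prime → q ∣ G → ¬ q ∣ d → q < p) →
      padicValNat p G = padicValNat p d →
      padicValNat p G.totient = padicValNat p d.totient := by
  haveI := Fact.mk hp
  intro G
  induction G using Nat.strong_induction_on with
  | _ G ih =>
    intro d hG hd hdG hq hv
    rcases eq_or_ne G d with rfl | hne
    · rfl
    obtain ⟨e, hGe⟩ := hdG
    have he0 : e ≠ 0 := by rintro rfl; rw [mul_zero] at hGe; exact hG.ne' hGe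
    have he1 : e ≠ 1 := by rintro rfl; rw [mul_one] at hGe; exact hne hGe
    set q := e.minFac with hqdef
    have hqp : q.Prime := Nat.minFac_prime he1
    obtain ⟨e', hee⟩ := Nat.minFac_dvd e
    have he'0 : e' ≠ 0 := by rintro rfl; rw [mul_zero] at hee; exact he0 hee
    set G' := d * e' with hG'def
    have hG'eq : G = q * G' := by rw [hGe, hee, hG'def]; ring
    have hG'0 : 0 < G' := Nat.mul_pos hd (Nat.pos_of_ne_zero he'0)
    have hG'dvd : G' ∣ G := hG'eq ▸ dvd_mul_left G' q
    have hG'lt : G' < G := by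
      rw [hG'eq]
      have := hqp.two_le
      nlinarith [hG'0]
    have hdG' : d ∣ G' := Dvd.intro e' rfl
    have hqsub : ∀ r : ℕ, r.Prime → r ∣ G' → ¬ r ∣ d → r < p :=
      fun r hr hrG' => hq r hr (hrG'.trans hG'dvd)
    have hqdvdG : q ∣ G := hG'eq ▸ dvd_mul_right q G'
    have hvd_le : padicValNat p d ≤ padicValNat p G' :=
      (padicValNat_dvd_iff_le hG'0.ne').mp (dvd_trans pow_padicValNat_dvd hdG')
    by_cases hqG' : q ∣ G'
    · have htot : G.totient = q * G'.totient := by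
        rw [hG'eq]; exact Nat.totient_mul_of_prime_of_dvd hqp hqG'
      have hsplit : padicValNat p G = padicValNat p q + padicValNat p G' := by
        rw [hG'eq, padicValNat.mul hqp.pos.ne' hG'0.ne']
      have hqnep : q ≠ p := by
        rintro rfl
        rw [padicValNat.self hp.one_lt] at hsplit
        omega
      have hvq : padicValNat p q = 0 := by
        apply padicValNat.eq_zero_of_not_dvd
        intro hpq
        exact hqnep ((Nat.prime_dvd_prime_iff_eq hp hqp).mp hpq).symm
      have hvG' : padicValNat p G' = padicValNat p d := by omega
      rw [htot, padicValNat.mul hqp.pos.ne' (Nat.totient_pos.mpr hG'0).ne', hvq,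
        ih G' hG'lt hG'0 hd hdG' hqsub hvG', zero_add]
    · have hcop : Nat.Coprime q G' := (Nat.Prime.coprime_iff_not_dvd hqp).mpr hqG'
      have htot : G.totient = q.totient * G'.totient := by
        rw [hG'eq, Nat.totient_mul hcop]
      have hqnd : ¬ q ∣ d := fun h => hqG' (h.trans hdG')
      have hqltp : q < p := hq q hqp hqdvdG hqnd
      have hvq : padicValNat p q = 0 := by
        apply padicValNat.eq_zero_of_not_dvd
        intro hpq
        exact absurd (Nat.le_of_dvd hqp.pos hpq) (by omega)
      have hsplit : padicValNat p G = padicValNat p q + padicValNat p G' := by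
        rw [hG'eq, padicValNat.mul hqp.pos.ne' hG'0.ne']
      have hvG' : padicValNat p G' = padicValNat p d := by omega
      have hvqt : padicValNat p q.totient = 0 := by
        rw [Nat.totient_prime hqp]
        apply padicValNat.eq_zero_of_not_dvd
        intro hpd
        have h1 : 0 < q - 1 := by have := hqp.two_le; omega
        have := Nat.le_of_dvd h1 hpd
        omega
      rw [htot, padicValNat.mul (Nat.totient_pos.mpr hqp.pos).ne'
        (Nat.totient_pos.mpr hG'0).ne', hvqt,
        ih G' hG'lt hG'0 hd hdG' hqsub hvG', zero_add]

lemma aux_padicValNat_prod {p : ℕ} (hp : p.Prime) {ι : Type*} {s : Finset ι} {f : ι → ℕ}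
    (h : ∀ i ∈ s, f i ≠ 0) :
    padicValNat p (∏ i ∈ s, f i) = ∑ i ∈ s, padicValNat p (f i) := by
  haveI := Fact.mk hp
  classical
  induction s using Finset.induction_on with
  | empty => simp
  | @insert x s hx ih =>
    rw [Finset.prod_insert hx, Finset.sum_insert hx,
      padicValNat.mul (h x (mem_insert_self x s))
        (Finset.prod_ne_zero_iff.mpr (fun i hi => h i (mem_insert_of_mem hi))),
      ih (fun i hi => h i (mem_insert_of_mem hi))]


/-- For each prime `p ≥ c L_k + 1` and each positive integer `n`,
`v_p (g_{k,φ} (n)) = k ⬝ v_p (φ (gcd a b))`; in particular `n ↦ v_p (g_{k,φ} (n))`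
is constant, i.e. has smallest period `1`. -/
theorem vp_gkphi_const_of_large_prime (k a b c : ℕ)
    (hk : 1 ≤ k) (ha : 1 ≤ a) (hc : 1 ≤ c)
    (p : ℕ) (hp : p.Prime) (hpc : c * Lk k + 1 ≤ p) :
    (∀ n : ℕ, 0 < n →
      padicValRat p (gkphi k a b c n) =
        (k : ℤ) * padicValNat p (Nat.gcd a b).totient) ∧
    IsLeast {T : ℕ | 0 < T ∧ ∀ n : ℕ, 0 < n →
      padicValRat p (gkphi k a b c (n + T)) = padicValRat p (gkphi k a b c n)} 1 := by
  haveI := Fact.mk hp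
  have hd : 0 < Nat.gcd a b := Nat.gcd_pos_of_pos_left b ha
  set d := Nat.gcd a b with hddef
  set m := padicValNat p d with hmdef
  have hLk0 : Lk k ≠ 0 := by
    apply aux_finsetLcm_ne_zero
    intro i hi
    have := (Finset.mem_Icc.mp hi).1
    simp only [id]
    omega
  have hmain : ∀ n : ℕ, 0 < n → padicValRat p (gkphi k a b c n) =
      (k : ℤ) * padicValNat p d.totient := by
    intro n hn
    set x : ℕ → ℕ := fun i => b + a * (n + i * c) with hxdef
    have hxpos : ∀ i, 0 < x i := by
      intro i
      have h1 : 1 * 1 ≤ a * (n + i * c) := Nat.mul_le_mul ha (by omega)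
      simp only [hxdef]
      omega
    have hdx : ∀ i, d ∣ x i :=
      fun i => Nat.dvd_add (Nat.gcd_dvd_right a b) ((Nat.gcd_dvd_left a b).mul_right _)
    have hdiff : ∀ i j, i < j → x j = x i + a * (c * (j - i)) := by
      intro i j hij
      simp only [hxdef]
      have h1 : j * c = i * c + (j - i) * c := by rw [← Nat.add_mul]; congr 1; omega
      rw [h1]; ring
    have hcd : ∀ t, 1 ≤ t → t ≤ k → c * t < p := by
      intro t h1 h2
      have hdvd : c * t ∣ c * Lk k :=
        mul_dvd_mul_left c (Finset.dvd_lcm (Finset.mem_Icc.mpr ⟨h1, h2⟩))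
      have hpos : 0 < c * Lk k := Nat.mul_pos hc (Nat.pos_of_ne_zero hLk0)
      have := Nat.le_of_dvd hpos hdvd
      omega
    have hC : ∀ i j, i < j → j ≤ k → p ^ (m + 1) ∣ x i → p ^ (m + 1) ∣ x j → False := by
      intro i j hij hjk h1 h2
      have hD : p ^ (m + 1) ∣ a * (c * (j - i)) := by
        have h3 := Nat.dvd_sub h2 h1
        rwa [hdiff i j hij, Nat.add_sub_cancel_left] at h3
      have hpt : ¬ p ∣ c * (j - i) := by
        intro hdvd
        have h4 : 0 < c * (j - i) := Nat.mul_pos hc (by omega)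
        have := Nat.le_of_dvd h4 hdvd
        have := hcd (j - i) (by omega) (by omega)
        omega
      have hcop : Nat.Coprime (p ^ (m + 1)) (c * (j - i)) :=
        Nat.Coprime.pow_left _ ((Nat.Prime.coprime_iff_not_dvd hp).mpr hpt)
      have hpa : p ^ (m + 1) ∣ a := hcop.dvd_of_dvd_mul_right hD
      have hpb : p ^ (m + 1) ∣ b := by
        have h3 : p ^ (m + 1) ∣ a * (n + i * c) := hpa.mul_right _
        have h4 := Nat.dvd_sub h1 h3
        simp only [hxdef] at h4
        rwa [Nat.add_sub_cancel] at h4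
      have h5 : p ^ (m + 1) ∣ d := Nat.dvd_gcd hpa hpb
      have := (padicValNat_dvd_iff_le hd.ne').mp h5
      omega
    have hlcm0 : ∀ s : Finset ℕ, s.lcm x ≠ 0 :=
      fun s => aux_finsetLcm_ne_zero (fun i _ => (hxpos i).ne')
    have hstep : ∀ j, 1 ≤ j → j ≤ k →
        padicValNat p (Nat.gcd ((Finset.range j).lcm x) (x j)).totient
          = padicValNat p d.totient := by
      intro j h1 h2
      have hM0 : (Finset.range j).lcm x ≠ 0 := hlcm0 _
      have hG0 : 0 < Nat.gcd ((Finset.range j).lcm x) (x j) :=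
        Nat.gcd_pos_of_pos_right _ (hxpos j)
      have hddvd : d ∣ Nat.gcd ((Finset.range j).lcm x) (x j) :=
        Nat.dvd_gcd ((hdx 0).trans (Finset.dvd_lcm (Finset.mem_range.mpr h1))) (hdx j)
      apply aux_vphi hp _ hG0 hd hddvd
      · intro r hr hrG hrd
        have hrM : r ∣ (Finset.range j).lcm x := hrG.trans (Nat.gcd_dvd_left _ _)
        have hrxj : r ∣ x j := hrG.trans (Nat.gcd_dvd_right _ _)
        have hrM1 : r ^ 1 ∣ (Finset.range j).lcm x := by rwa [pow_one]
        obtain h0 | ⟨i, hi, hrxi⟩ :=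
          aux_pow_dvd_lcm hr (fun i _ => (hxpos i).ne') hrM1
        · exact absurd h0 one_ne_zero
        · rw [pow_one] at hrxi
          have hij : i < j := Finset.mem_range.mp hi
          have hrD : r ∣ a * (c * (j - i)) := by
            have h3 := Nat.dvd_sub hrxj hrxi
            rwa [hdiff i j hij, Nat.add_sub_cancel_left] at h3
          rcases (Nat.Prime.dvd_mul hr).mp hrD with hra | hrc
          · exfalso
            apply hrd
            apply Nat.dvd_gcd hra
            have h3 : r ∣ a * (n + i * c) := hra.mul_right _
            have h4 := Nat.dvd_sub hrxi h3
            simp only [hxdef] at h4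
            rwa [Nat.add_sub_cancel] at h4
          · have hpos : 0 < c * (j - i) := Nat.mul_pos hc (by omega)
            have := Nat.le_of_dvd hpos hrc
            have := hcd (j - i) (by omega) (by omega)
            omega
      · have hge : m ≤ padicValNat p (Nat.gcd ((Finset.range j).lcm x) (x j)) :=
          (padicValNat_dvd_iff_le hG0.ne').mp ((pow_padicValNat_dvd).trans hddvd)
        have hle : padicValNat p (Nat.gcd ((Finset.range j).lcm x) (x j)) ≤ m := by
          by_contra hlt
          push_neg at hlt
          have hdv : p ^ (m + 1) ∣ Nat.gcd ((Finset.range j).lcm x) (x j) :=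
            (padicValNat_dvd_iff_le hG0.ne').mpr (by omega)
          have hdxj : p ^ (m + 1) ∣ x j := hdv.trans (Nat.gcd_dvd_right _ _)
          have hdM : p ^ (m + 1) ∣ (Finset.range j).lcm x := hdv.trans (Nat.gcd_dvd_left _ _)
          obtain h0 | ⟨i, hi, hdxi⟩ :=
            aux_pow_dvd_lcm hp (fun i _ => (hxpos i).ne') hdM
          · omega
          · exact hC i j (Finset.mem_range.mp hi) h2 hdxi hdxj
        omega
    have hsum : ∀ j, j ≤ k →
        ∑ i ∈ Finset.range (j + 1), padicValNat p (x i).totient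
          = padicValNat p ((Finset.range (j + 1)).lcm x).totient
            + j * padicValNat p d.totient := by
      intro j
      induction j with
      | zero =>
        intro _
        simp [Finset.range_one, Finset.lcm_singleton, normalize_eq]
      | succ j ihj =>
        intro hjk
        have hjk' : j ≤ k := by omega
        rw [Finset.sum_range_succ, ihj hjk']
        have hlcmsucc : (Finset.range (j + 1 + 1)).lcm x
            = Nat.lcm ((Finset.range (j + 1)).lcm x) (x (j + 1)) := by
          rw [Finset.range_add_one, Finset.lcm_insert, lcm_eq_nat_lcm, Nat.lcm_comm]
        have hM0 : 0 < (Finset.range (j + 1)).lcm x := Nat.pos_of_ne_zero (hlcm0 _)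
        have hL0 : 0 < Nat.lcm ((Finset.range (j + 1)).lcm x) (x (j + 1)) :=
          Nat.pos_of_ne_zero (Nat.lcm_ne_zero hM0.ne' (hxpos _).ne')
        have hG0 : 0 < Nat.gcd ((Finset.range (j + 1)).lcm x) (x (j + 1)) :=
          Nat.gcd_pos_of_pos_right _ (hxpos _)
        have key := congrArg (padicValNat p)
          (aux_totient_gcd_mul_totient_lcm hM0 (hxpos (j + 1)))
        rw [padicValNat.mul (Nat.totient_pos.mpr hG0).ne' (Nat.totient_pos.mpr hL0).ne',
          padicValNat.mul (Nat.totient_pos.mpr hM0).ne' (Nat.totient_pos.mpr (hxpos _)).ne',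
          hstep (j + 1) (by omega) hjk] at key
        rw [hlcmsucc]
        have hsucc : (j + 1) * padicValNat p d.totient
            = j * padicValNat p d.totient + padicValNat p d.totient := by ring
        omega
    have hnum : (∏ i ∈ Finset.range (k + 1), ((b + a * (n + i * c)).totient : ℚ))
        = ((∏ i ∈ Finset.range (k + 1), (x i).totient : ℕ) : ℚ) := by
      rw [Nat.cast_prod]
    have hL0 : 0 < ((Finset.range (k + 1)).lcm fun i => b + a * (n + i * c)).totient :=
      Nat.totient_pos.mpr (Nat.pos_of_ne_zero (hlcm0 _))
    have hprod0 : (∏ i ∈ Finset.range (k + 1), (x i).totient) ≠ 0 :=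
      Finset.prod_ne_zero_iff.mpr (fun i _ => (Nat.totient_pos.mpr (hxpos i)).ne')
    unfold gkphi
    rw [hnum, padicValRat.div (by exact_mod_cast hprod0) (by exact_mod_cast hL0.ne'),
      padicValRat.of_nat, padicValRat.of_nat,
      aux_padicValNat_prod hp (fun i _ => (Nat.totient_pos.mpr (hxpos i)).ne'),
      hsum k le_rfl]
    push_cast
    ring
  refine ⟨hmain, ⟨⟨one_pos, fun n hn => by rw [hmain (n + 1) (by omega), hmain n hn]⟩,
    fun T hT => hT.1⟩⟩
end

section
/- Let k ≥ 1, a ≥ 1, b ≥ 0 and c ≥ 1 be integers. Then the smallest period P_{k,φ} of g_{k,φ} equals the least common multiple, taken over all primes p ≤ c·L_k, of the smallest periods P_{p,k,φ} of the functions g_{p,k,φ}. -/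
open Finset
open scoped Nat

section PosPeriodic

variable {α β : Type*} {F : ℕ → α} {T : ℕ}

def PosPeriodic (F : ℕ → α) (T : ℕ) : Prop :=
  ∀ n, 0 < n → F (n + T) = F n

lemma PosPeriodic.comp (h : PosPeriodic F T) (f : α → β) : PosPeriodic (f ∘ F) T :=
  fun n hn => congrArg f (h n hn)

lemma PosPeriodic.of_dvd (h : PosPeriodic F T) {T' : ℕ} (hT : T ∣ T') : PosPeriodic F T' := by
  obtain ⟨t, rfl⟩ := hT
  induction t with
  | zero => simp [PosPeriodic]
  | succ t ih =>
    intro n hn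
    rw [mul_add_one, ← add_assoc, h _ (by omega), ih n hn]

lemma PosPeriodic.of_forall_eq {C : α} (h : ∀ n, 0 < n → F n = C) : PosPeriodic F T :=
  fun n hn => (h _ (by omega)).trans (h n hn).symm

lemma IsLeast.dvd_of_posPeriodic {P : ℕ} (hP : IsLeast {T | 0 < T ∧ PosPeriodic F T} P)
    (hT : PosPeriodic F T) : P ∣ T := by
  obtain ⟨⟨hP0, hPF⟩, hmin⟩ := hP
  by_contra hdvd
  have hmod : PosPeriodic F (T % P) := fun n hn => by
    calc F (n + T % P) = F (n + T % P + T / P * P) :=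
          ((hPF.of_dvd (dvd_mul_left P _)) _ (by omega)).symm
      _ = F n := by rw [add_assoc, Nat.mod_add_div', hT n hn]
  have hmod0 : 0 < T % P := Nat.pos_of_ne_zero fun h0 => hdvd (Nat.dvd_of_mod_eq_zero h0)
  exact (Nat.mod_lt T hP0).not_ge (hmin ⟨hmod0, hmod⟩)

end PosPeriodic

theorem Rat.eq_of_forall_padicValRat_eq {q r : ℚ} (hq : 0 < q) (hr : 0 < r)
    (h : ∀ p, p.Prime → padicValRat p q = padicValRat p r) : q = r := by
  have hnum : ∀ {x : ℚ}, 0 < x → (x.num.natAbs : ℚ) / x.den = x := fun hx => by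
    rw [Nat.cast_natAbs, abs_of_pos (Rat.num_pos.mpr hx), Rat.num_div_den]
  have hnum0 : ∀ {x : ℚ}, 0 < x → x.num.natAbs ≠ 0 := fun hx =>
    Int.natAbs_ne_zero.mpr (Rat.num_ne_zero.mpr hx.ne')
  have hcross : q.num.natAbs * r.den = r.num.natAbs * q.den := by
    rw [Nat.eq_iff_prime_padicValNat_eq _ _ (mul_ne_zero (hnum0 hq) r.den_ne_zero)
      (mul_ne_zero (hnum0 hr) q.den_ne_zero)]
    intro p hp
    have := Fact.mk hp
    have hqr := h p hp
    rw [padicValRat_def, padicValRat_def, padicValInt, padicValInt] at hqr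
    rw [padicValNat.mul (hnum0 hq) r.den_ne_zero, padicValNat.mul (hnum0 hr) q.den_ne_zero]
    omega
  rw [← hnum hq, ← hnum hr, div_eq_div_iff (by positivity) (by positivity)]
  exact_mod_cast hcross

lemma sum_comp_eq_comp_sup_add_of_unique_gt {ι : Type*} [DecidableEq ι] {s : Finset ι}
    (hs : s.Nonempty) {f : ι → ℕ} {γ : ℕ} (hγ : ∀ i ∈ s, γ ≤ f i)
    (huniq : ∀ i ∈ s, ∀ j ∈ s, γ < f i → γ < f j → i = j) (h : ℕ → ℕ) :
    ∑ i ∈ s, h (f i) = h (s.sup f) + (#s - 1) * h γ := by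
  obtain ⟨i₀, hi₀, hsup⟩ := s.exists_mem_eq_sup hs f
  have hrest : ∀ i ∈ s.erase i₀, h (f i) = h γ := by
    intro i hi
    obtain ⟨hne, hi⟩ := mem_erase.mp hi
    suffices f i = γ by rw [this]
    by_contra hfi
    have hlt : γ < f i := lt_of_le_of_ne (hγ i hi) (Ne.symm hfi)
    exact hne (huniq i hi i₀ hi₀ hlt (hsup ▸ hlt.trans_le (le_sup hi)))
  rw [← add_sum_erase s _ hi₀, sum_congr rfl hrest, sum_const, card_erase_of_mem hi₀,
    smul_eq_mul, hsup]

lemma sum_comp_factorization_eq_of_common_pow_dvd {ι : Type*} [DecidableEq ι] {s : Finset ι}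
    (hs : s.Nonempty) {m : ι → ℕ} (hm : ∀ i ∈ s, m i ≠ 0) {G : ℕ} (hG : G ≠ 0)
    (hGm : ∀ i ∈ s, G ∣ m i) {ℓ : ℕ} (hℓ : ℓ.Prime)
    (hcommon : ∀ i ∈ s, ∀ j ∈ s, i ≠ j → ∀ e, ℓ ^ e ∣ m i → ℓ ^ e ∣ m j → ℓ ^ e ∣ G)
    (h : ℕ → ℕ) :
    ∑ i ∈ s, h ((m i).factorization ℓ)
      = h ((s.lcm m).factorization ℓ) + (#s - 1) * h (G.factorization ℓ) := by
  rw [Finset.factorization_lcm hm]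
  refine sum_comp_eq_comp_sup_add_of_unique_gt hs
    (fun i hi => (Nat.factorization_le_iff_dvd hG (hm i hi)).mpr (hGm i hi) ℓ)
    (fun i hi j hj hlti hltj => ?_) h
  by_contra hij
  refine Nat.pow_succ_factorization_not_dvd hG hℓ (hcommon i hi j hj hij _ ?_ ?_)
  · exact (hℓ.pow_dvd_iff_le_factorization (hm i hi)).mpr hlti
  · exact (hℓ.pow_dvd_iff_le_factorization (hm j hj)).mpr hltj

lemma factorization_totient_eq_sum {m : ℕ} (hm : m ≠ 0) {S : Finset ℕ}
    (hS : m.primeFactors ⊆ S) (p : ℕ) :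
    (φ m).factorization p = ∑ q ∈ S, (φ (q ^ m.factorization q)).factorization p := by
  have hmul := Nat.multiplicative_factorization φ (fun _ _ => Nat.totient_mul) Nat.totient_one hm
  rw [hmul, Nat.prod_factorization_eq_prod_primeFactors, Nat.factorization_prod_apply]
  · refine sum_subset hS fun q _ hq => ?_
    rw [← Nat.support_factorization, Finsupp.notMem_support_iff] at hq
    simp [hq]
  · intro q hq
    exact (Nat.totient_pos.mpr (pow_pos (Nat.prime_of_mem_primeFactors hq).pos _)).ne'

lemma factorization_totient_prime_pow_of_lt {p q : ℕ} (hp : p.Prime) (hq : q.Prime) (hqp : q < p)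
    (e : ℕ) : (φ (q ^ e)).factorization p = 0 := by
  cases e with
  | zero => simp
  | succ e =>
    rw [Nat.totient_prime_pow_succ hq]
    refine Nat.factorization_eq_zero_of_not_dvd fun hdvd => ?_
    rcases (Nat.Prime.dvd_mul hp).mp hdvd with hpq | hpq
    · exact hqp.ne' ((Nat.prime_dvd_prime_iff_eq hp hq).mp (hp.dvd_of_dvd_pow hpq))
    · exact Nat.not_dvd_of_pos_of_lt (by have := hq.two_le; omega) (by omega) hpq

section Progression

variable {k a b c n : ℕ}

lemma prime_pow_dvd_gcd_of_dvd_progression {ℓ e i j : ℕ} (hℓ : ℓ.Prime) (hc : 0 < c)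
    (hℓk : c * k < ℓ) (hij : i < j) (hjk : j ≤ k)
    (hi : ℓ ^ e ∣ b + a * (n + i * c)) (hj : ℓ ^ e ∣ b + a * (n + j * c)) :
    ℓ ^ e ∣ Nat.gcd a b := by
  have hdiff : b + a * (n + j * c) = b + a * (n + i * c) + a * (c * (j - i)) := by
    obtain ⟨t, rfl⟩ := Nat.exists_eq_add_of_le hij.le
    rw [Nat.add_sub_cancel_left]
    ring
  have hcop : Nat.Coprime (ℓ ^ e) (c * (j - i)) := by
    refine Nat.Coprime.pow_left e (hℓ.coprime_iff_not_dvd.mpr (Nat.not_dvd_of_pos_of_lt ?_ ?_))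
    · exact Nat.mul_pos hc (by omega)
    · exact lt_of_le_of_lt (Nat.mul_le_mul_left c (by omega)) hℓk
  have hda : ℓ ^ e ∣ a :=
    hcop.dvd_of_dvd_mul_right ((Nat.dvd_add_right hi).mp (hdiff ▸ hj))
  exact Nat.dvd_gcd hda ((Nat.dvd_add_left (hda.mul_right _)).mp hi)

lemma gcd_dvd_progression (i : ℕ) : Nat.gcd a b ∣ b + a * (n + i * c) :=
  dvd_add (Nat.gcd_dvd_right a b) ((Nat.gcd_dvd_left a b).mul_right _)

lemma progression_ne_zero (ha : 0 < a) (hn : 0 < n) (i : ℕ) : b + a * (n + i * c) ≠ 0 := by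
  positivity

lemma lcm_progression_ne_zero (ha : 0 < a) (hn : 0 < n) :
    (range (k + 1)).lcm (fun i => b + a * (n + i * c)) ≠ 0 := by
  rw [Ne, Finset.lcm_eq_zero_iff]
  rintro ⟨i, -, hi⟩
  exact progression_ne_zero ha hn i hi

lemma sum_comp_factorization_progression {ℓ : ℕ} (hℓ : ℓ.Prime) (hc : 0 < c) (ha : 0 < a)
    (hn : 0 < n) (hℓk : c * k < ℓ) (h : ℕ → ℕ) :
    ∑ i ∈ range (k + 1), h ((b + a * (n + i * c)).factorization ℓ)
      = h (((range (k + 1)).lcm fun i => b + a * (n + i * c)).factorization ℓ)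
        + k * h ((Nat.gcd a b).factorization ℓ) := by
  have hcommon : ∀ i ∈ range (k + 1), ∀ j ∈ range (k + 1), i ≠ j → ∀ e,
      ℓ ^ e ∣ b + a * (n + i * c) → ℓ ^ e ∣ b + a * (n + j * c) → ℓ ^ e ∣ Nat.gcd a b := by
    intro i hi j hj hij e hdi hdj
    rw [mem_range] at hi hj
    rcases lt_or_gt_of_ne hij with hlt | hlt
    · exact prime_pow_dvd_gcd_of_dvd_progression hℓ hc hℓk hlt (by omega) hdi hdj
    · exact prime_pow_dvd_gcd_of_dvd_progression hℓ hc hℓk hlt (by omega) hdj hdi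
  simpa only [card_range, Nat.add_sub_cancel] using
    sum_comp_factorization_eq_of_common_pow_dvd nonempty_range_add_one
      (fun i _ => progression_ne_zero ha hn i) (Nat.gcd_pos_of_pos_left b ha).ne'
      (fun i _ => gcd_dvd_progression i) hℓ hcommon h

lemma factorization_prod_totient_progression {p : ℕ} (hp : p.Prime) (hc : 0 < c) (ha : 0 < a)
    (hn : 0 < n) (hpk : c * k < p) :
    (∏ i ∈ range (k + 1), φ (b + a * (n + i * c))).factorization p
      = (φ ((range (k + 1)).lcm fun i => b + a * (n + i * c))).factorization p
        + k * (φ (Nat.gcd a b)).factorization p := by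
  set L := (range (k + 1)).lcm fun i => b + a * (n + i * c)
  have hL : L ≠ 0 := lcm_progression_ne_zero ha hn
  have hG : Nat.gcd a b ≠ 0 := (Nat.gcd_pos_of_pos_left b ha).ne'
  have hsub : ∀ i ∈ range (k + 1), (b + a * (n + i * c)).primeFactors ⊆ L.primeFactors :=
    fun i hi => Nat.primeFactors_mono (dvd_lcm hi) hL
  have hGL : (Nat.gcd a b).primeFactors ⊆ L.primeFactors :=
    Nat.primeFactors_mono
      ((gcd_dvd_progression 0).trans (dvd_lcm (mem_range.mpr k.succ_pos))) hL
  rw [Nat.factorization_prod_apply fun i _ =>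
      (Nat.totient_pos.mpr (Nat.pos_of_ne_zero (progression_ne_zero ha hn i))).ne',
    sum_congr rfl fun i hi => factorization_totient_eq_sum (progression_ne_zero ha hn i)
      (hsub i hi) p,
    sum_comm, factorization_totient_eq_sum hL subset_rfl, factorization_totient_eq_sum hG hGL,
    mul_sum, ← sum_add_distrib]
  refine sum_congr rfl fun q hq => ?_
  have hq : q.Prime := Nat.prime_of_mem_primeFactors hq
  -- `v_p (φ (q ^ e))` vanishes unless `q ≥ p`, and such `q` exceed `c k`
  rcases lt_or_ge q p with hqp | hpq
  · simp only [factorization_totient_prime_pow_of_lt hp hq hqp, sum_const_zero, mul_zero,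
      add_zero]
  · exact sum_comp_factorization_progression hq hc ha hn (by omega)
      (fun e => (φ (q ^ e)).factorization p)

end Progression

lemma le_Lk (k : ℕ) : k ≤ Lk k := by
  rcases Nat.eq_zero_or_pos k with rfl | hk
  · exact Nat.zero_le _
  have hLk : Lk k ≠ 0 := by
    rw [Lk, Ne, Finset.lcm_eq_zero_iff]
    rintro ⟨i, hi, rfl⟩
    simp at hi
  exact Nat.le_of_dvd (Nat.pos_of_ne_zero hLk) (dvd_lcm (mem_Icc.mpr ⟨hk, le_rfl⟩))

section Gkphi

variable {k a b c n : ℕ}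

lemma gkphi_eq_div : gkphi k a b c n
    = ((∏ i ∈ range (k + 1), φ (b + a * (n + i * c)) : ℕ) : ℚ)
      / (φ ((range (k + 1)).lcm fun i => b + a * (n + i * c)) : ℚ) := by
  rw [gkphi, Nat.cast_prod]

lemma prod_totient_progression_ne_zero (ha : 0 < a) (hn : 0 < n) :
    ∏ i ∈ range (k + 1), φ (b + a * (n + i * c)) ≠ 0 :=
  prod_ne_zero_iff.mpr fun i _ =>
    (Nat.totient_pos.mpr (Nat.pos_of_ne_zero (progression_ne_zero ha hn i))).ne'

lemma totient_lcm_progression_ne_zero (ha : 0 < a) (hn : 0 < n) :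
    φ ((range (k + 1)).lcm fun i => b + a * (n + i * c)) ≠ 0 :=
  (Nat.totient_pos.mpr (Nat.pos_of_ne_zero (lcm_progression_ne_zero ha hn))).ne'

lemma gkphi_pos (ha : 0 < a) (hn : 0 < n) : 0 < gkphi k a b c n := by
  rw [gkphi_eq_div]
  have := prod_totient_progression_ne_zero (k := k) (b := b) (c := c) ha hn
  have := totient_lcm_progression_ne_zero (k := k) (b := b) (c := c) ha hn
  positivity

lemma padicValRat_gkphi_of_lt {p : ℕ} (hp : p.Prime) (hc : 0 < c) (ha : 0 < a) (hn : 0 < n)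
    (hpk : c * Lk k < p) :
    padicValRat p (gkphi k a b c n) = k * (φ (Nat.gcd a b)).factorization p := by
  have := Fact.mk hp
  rw [gkphi_eq_div,
    padicValRat.div (Nat.cast_ne_zero.mpr (prod_totient_progression_ne_zero ha hn))
      (Nat.cast_ne_zero.mpr (totient_lcm_progression_ne_zero ha hn)), padicValRat.of_nat,
    padicValRat.of_nat, ← Nat.factorization_def _ hp, ← Nat.factorization_def _ hp,
    factorization_prod_totient_progression hp hc ha hn
      ((Nat.mul_le_mul_left c (le_Lk k)).trans_lt hpk)]
  push_cast
  ring

lemma PosPeriodic.gkphi_of_padicValRat {T : ℕ} (ha : 0 < a)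
    (h : ∀ p, p.Prime → PosPeriodic (fun n => padicValRat p (gkphi k a b c n)) T) :
    PosPeriodic (gkphi k a b c) T := fun n hn =>
  Rat.eq_of_forall_padicValRat_eq (gkphi_pos ha (by omega)) (gkphi_pos ha hn) fun p hp =>
    h p hp n hn

end Gkphi

theorem smallest_period_eq_lcm_of_local_periods_general (k a b c : ℕ)
    (ha : 1 ≤ a) (hc : 1 ≤ c)
    (P : ℕ)
    (hP : IsLeast {T : ℕ | 0 < T ∧ ∀ n : ℕ, 0 < n →
      gkphi k a b c (n + T) = gkphi k a b c n} P)
    (Pp : ℕ → ℕ)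
    (hPp : ∀ p : ℕ, p.Prime → p ≤ c * Lk k →
      IsLeast {T : ℕ | 0 < T ∧ ∀ n : ℕ, 0 < n →
        padicValRat p (gkphi k a b c (n + T)) = padicValRat p (gkphi k a b c n)} (Pp p)) :
    P = ((Finset.range (c * Lk k + 1)).filter Nat.Prime).lcm Pp := by
  set S := (range (c * Lk k + 1)).filter Nat.Prime
  have mem_S : ∀ {p}, p ∈ S ↔ p.Prime ∧ p ≤ c * Lk k := by
    simp [S, and_comm]
  have hLP : S.lcm Pp ∣ P := Finset.lcm_dvd fun p hp =>
    IsLeast.dvd_of_posPeriodic (F := fun n => padicValRat p (gkphi k a b c n))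
      (hPp p (mem_S.1 hp).1 (mem_S.1 hp).2) (PosPeriodic.comp hP.1.2 (padicValRat p))
  have hL : PosPeriodic (gkphi k a b c) (S.lcm Pp) := by
    refine PosPeriodic.gkphi_of_padicValRat ha fun p hp => ?_
    by_cases hpc : p ≤ c * Lk k
    · exact PosPeriodic.of_dvd (F := fun n => padicValRat p (gkphi k a b c n))
        (hPp p hp hpc).1.2 (dvd_lcm (mem_S.2 ⟨hp, hpc⟩))
    · exact PosPeriodic.of_forall_eq fun n hn =>
        padicValRat_gkphi_of_lt hp hc ha hn (not_le.mp hpc)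
  exact le_antisymm (hP.2 ⟨Nat.pos_of_dvd_of_pos hLP hP.1.1, hL⟩) (Nat.le_of_dvd hP.1.1 hLP)

/-- Lemma 3.3: the smallest period `P_{k,φ}` of `g_{k,φ}` equals the lcm, over
all primes `p ≤ c L_k`, of the smallest periods `P_{p,k,φ}` of the functions
`g_{p,k,φ} (n) = v_p (g_{k,φ} (n))`. -/
theorem smallest_period_eq_lcm_of_local_periods (k a b c : ℕ)
    (hk : 1 ≤ k) (ha : 1 ≤ a) (hc : 1 ≤ c)
    (P : ℕ)
    (hP : IsLeast {T : ℕ | 0 < T ∧ ∀ n : ℕ, 0 < n →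
      gkphi k a b c (n + T) = gkphi k a b c n} P)
    (Pp : ℕ → ℕ)
    (hPp : ∀ p : ℕ, p.Prime → p ≤ c * Lk k →
      IsLeast {T : ℕ | 0 < T ∧ ∀ n : ℕ, 0 < n →
        padicValRat p (gkphi k a b c (n + T)) = padicValRat p (gkphi k a b c n)} (Pp p)) :
    P = ((Finset.range (c * Lk k + 1)).filter Nat.Prime).lcm Pp :=
  smallest_period_eq_lcm_of_local_periods_general k a b c ha hc P hP Pp hPp
end

section
/- Let k ≥ 1, a ≥ 1, b ≥ 0 and c ≥ 1 be integers, d := gcd(a, b), a' := a/d, b' := b/d, and let p be a prime with p | d. Then for every positive integer n, v_p(g_{k,φ}(n)) = k·v_p(φ(d)) + Σ_{e≥1} max(0, #{m ∈ S_{k,a',b',c}(n) : p^e | m} − 1) + Σ_q max(0, #{m ∈ S_{k,a',b',c}(n) : q | m} − 1) · v_p(q − 1), where the last sum ranges over all primes q with q ∤ d and p | (q − 1). -/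
open Finset

namespace Finset

variable {ι α : Type*}

theorem sum_sum_eq_sum_biUnion_add_finsum [DecidableEq α] (s : Finset ι) (A : ι → Finset α)
    (w : α → ℕ) :
    ∑ i ∈ s, ∑ x ∈ A i, w x =
      ∑ x ∈ s.biUnion A, w x + ∑ᶠ x, (#{i ∈ s | x ∈ A i} - 1) * w x := by
  have hcount : ∑ i ∈ s, ∑ x ∈ A i, w x = ∑ x ∈ s.biUnion A, #{i ∈ s | x ∈ A i} * w x := by
    rw [sum_comm' (t' := s.biUnion A) (s' := fun x => {i ∈ s | x ∈ A i})
      (fun i x => by simp only [mem_biUnion, mem_filter]; grind)]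
    simp only [sum_const, smul_eq_mul]
  have hsupport : (Function.support fun x => (#{i ∈ s | x ∈ A i} - 1) * w x) ⊆ s.biUnion A := by
    intro x hx
    have : #{i ∈ s | x ∈ A i} - 1 ≠ 0 := left_ne_zero_of_mul (Function.mem_support.1 hx)
    obtain ⟨i, hi⟩ : {i ∈ s | x ∈ A i}.Nonempty := card_pos.1 (by omega)
    exact mem_biUnion.2 ⟨i, (mem_filter.1 hi).1, (mem_filter.1 hi).2⟩
  rw [hcount, finsum_eq_sum_of_support_subset _ hsupport, ← sum_add_distrib]
  refine sum_congr rfl fun x hx => ?_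
  obtain ⟨i, hi, hxi⟩ := mem_biUnion.1 hx
  have : 1 ≤ #{i ∈ s | x ∈ A i} := card_pos.2 ⟨i, mem_filter.2 ⟨hi, hxi⟩⟩
  rw [← one_add_mul, Nat.add_sub_cancel' this]

theorem lcm_mul_left_of_nonempty {s : Finset ι} (hs : s.Nonempty) (d : ℕ) (f : ι → ℕ) :
    (s.lcm fun i => d * f i) = d * s.lcm f := by
  classical
  induction hs using Nonempty.cons_induction with
  | singleton i => simp
  | cons i s hi hs ih => rw [cons_eq_insert, lcm_insert, lcm_insert, ih, lcm_eq_nat_lcm,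
      lcm_eq_nat_lcm, Nat.lcm_mul_left]

theorem primeFactors_lcm {s : Finset ι} {f : ι → ℕ} (hf : ∀ i ∈ s, f i ≠ 0) :
    (s.lcm f).primeFactors = s.biUnion fun i => (f i).primeFactors := by
  ext q
  simp only [← Nat.support_factorization, Finsupp.mem_support_iff, factorization_lcm hf,
    mem_biUnion, ne_eq, ← Nat.pos_iff_ne_zero, Finset.lt_sup_iff]

end Finset

section padicValNat

variable {ι : Type*} {p : ℕ}

theorem padicValNat_finset_prod (hp : p.Prime) {s : Finset ι} {f : ι → ℕ}
    (hf : ∀ i ∈ s, f i ≠ 0) :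
    padicValNat p (∏ i ∈ s, f i) = ∑ i ∈ s, padicValNat p (f i) := by
  simp only [← Nat.factorization_def _ hp, Nat.factorization_prod hf, Finsupp.finsetSum_apply]

theorem padicValNat_finset_lcm (hp : p.Prime) {s : Finset ι} {f : ι → ℕ}
    (hf : ∀ i ∈ s, f i ≠ 0) :
    padicValNat p (s.lcm f) = s.sup fun i => padicValNat p (f i) := by
  simp only [← Nat.factorization_def _ hp, Finset.factorization_lcm hf]

theorem padicValNat_totient (hp : p.Prime) {m : ℕ} (hm : m ≠ 0) :
    padicValNat p m.totient =
      (padicValNat p m - 1) + ∑ q ∈ m.primeFactors, padicValNat p (q - 1) := by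
  have : Fact p.Prime := ⟨hp⟩
  have hfactor : ∀ q ∈ m.primeFactors, padicValNat p (q ^ (m.factorization q - 1) * (q - 1)) =
      (if q = p then padicValNat p m - 1 else 0) + padicValNat p (q - 1) := by
    intro q hq
    have hq := Nat.prime_of_mem_primeFactors hq
    rw [padicValNat.mul (pow_ne_zero _ hq.ne_zero) (by have := hq.two_le; omega),
      padicValNat.pow]
    split_ifs with hqp
    · subst hqp; rw [padicValNat_self, mul_one, Nat.factorization_def _ hp]
    · have : Fact q.Prime := ⟨hq⟩
      rw [padicValNat_primes (Ne.symm hqp), mul_zero]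
  rw [Nat.totient_eq_prod_factorization hm, Finsupp.prod, Nat.support_factorization,
    padicValNat_finset_prod hp (fun q hq => by
      have hq := Nat.prime_of_mem_primeFactors hq
      exact mul_ne_zero (pow_ne_zero _ hq.ne_zero) (by have := hq.two_le; omega)),
    sum_congr rfl hfactor, sum_add_distrib, sum_ite_eq']
  split_ifs with hpm
  · rfl
  · simp [padicValNat.eq_zero_of_not_dvd fun h => hpm (hp.mem_primeFactors h hm)]

theorem padicValNat_totient_mul_of_dvd (hp : p.Prime) {d x : ℕ} (hd : d ≠ 0) (hpd : p ∣ d)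
    (hx : x ≠ 0) :
    padicValNat p (d * x).totient = padicValNat p d.totient + padicValNat p x +
      ∑ q ∈ x.primeFactors \ d.primeFactors, padicValNat p (q - 1) := by
  have : Fact p.Prime := ⟨hp⟩
  have hvd : 1 ≤ padicValNat p d := one_le_padicValNat_of_dvd hd hpd
  rw [padicValNat_totient hp (mul_ne_zero hd hx), padicValNat_totient hp hd,
    padicValNat.mul hd hx, Nat.primeFactors_mul hd hx, ← union_sdiff_self_eq_union,
    sum_union disjoint_sdiff]
  omega

end padicValNat

section excess

variable {ι : Type*} {s : Finset ι} {f : ι → ℕ}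

theorem sum_padicValNat_eq_padicValNat_lcm_add_finsum {p : ℕ} (hp : p.Prime)
    (hf : ∀ i ∈ s, f i ≠ 0) :
    ∑ i ∈ s, padicValNat p (f i) =
      padicValNat p (s.lcm f) + ∑ᶠ (e : ℕ) (_ : 1 ≤ e), (#{i ∈ s | p ^ e ∣ f i} - 1) := by
  have : Fact p.Prime := ⟨hp⟩
  have hcount := sum_sum_eq_sum_biUnion_add_finsum s (fun i => Icc 1 (padicValNat p (f i))) 1
  have hunion : (s.biUnion fun i => Icc 1 (padicValNat p (f i))) =
      Icc 1 (padicValNat p (s.lcm f)) := by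
    ext e
    simp only [mem_biUnion, mem_Icc, padicValNat_finset_lcm hp hf]
    constructor
    · rintro ⟨i, hi, he, hei⟩
      exact ⟨he, hei.trans (le_sup (f := fun i => padicValNat p (f i)) hi)⟩
    · rintro ⟨he, hes⟩
      obtain ⟨i, hi, hei⟩ := (Finset.le_sup_iff (by rw [Nat.bot_eq_zero]; omega)).1 hes
      exact ⟨i, hi, he, hei⟩
  have hlayer : ∀ e, #{i ∈ s | e ∈ Icc 1 (padicValNat p (f i))} - 1 =
      ∑ᶠ (_ : 1 ≤ e), (#{i ∈ s | p ^ e ∣ f i} - 1) := by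
    intro e
    rw [finsum_eq_if]
    split_ifs with he
    · congr 2
      exact filter_congr fun i hi => by rw [mem_Icc, padicValNat_dvd_iff_le (hf i hi)]; omega
    · simp [show ∀ v, e ∉ Icc 1 v by simp; omega]
  simp only [Pi.one_apply, mul_one, sum_const, smul_eq_mul, Nat.card_Icc, Nat.add_sub_cancel,
    hunion] at hcount
  rwa [finsum_congr hlayer] at hcount

theorem sum_sum_primeFactors_sdiff_eq {d : ℕ} (hd : d ≠ 0) (hf : ∀ i ∈ s, f i ≠ 0)
    (w : ℕ → ℕ) :
    ∑ i ∈ s, ∑ q ∈ (f i).primeFactors \ d.primeFactors, w q =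
      ∑ q ∈ (s.lcm f).primeFactors \ d.primeFactors, w q +
        ∑ᶠ (q : ℕ) (_ : q.Prime ∧ ¬ q ∣ d), (#{i ∈ s | q ∣ f i} - 1) * w q := by
  have hcount := sum_sum_eq_sum_biUnion_add_finsum s
    (fun i => (f i).primeFactors \ d.primeFactors) w
  have hunion : (s.biUnion fun i => (f i).primeFactors \ d.primeFactors) =
      (s.lcm f).primeFactors \ d.primeFactors := by
    ext q
    simp only [primeFactors_lcm hf, mem_biUnion, mem_sdiff]
    grind
  rw [hunion] at hcount
  rw [hcount, finsum_congr fun q => ?_]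
  rw [finsum_eq_if]
  split_ifs with hq
  · congr 3
    exact filter_congr fun i hi => by simp [hq.1, hq.2, hd, hf i hi]
  · rw [filter_false_of_mem fun i _ => by simp only [mem_sdiff, Nat.mem_primeFactors]; tauto,
      card_empty, Nat.zero_sub, zero_mul]

end excess

theorem sum_padicValNat_totient_mul_eq {ι : Type*} {s : Finset ι} {f : ι → ℕ} {p d : ℕ}
    (hp : p.Prime) (hd : d ≠ 0) (hpd : p ∣ d) (hs : s.Nonempty) (hf : ∀ i ∈ s, f i ≠ 0) :
    ∑ i ∈ s, padicValNat p (d * f i).totient =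
      padicValNat p (s.lcm fun i => d * f i).totient + (#s - 1) * padicValNat p d.totient +
        ∑ᶠ (e : ℕ) (_ : 1 ≤ e), (#{i ∈ s | p ^ e ∣ f i} - 1) +
        ∑ᶠ (q : ℕ) (_ : q.Prime ∧ ¬ q ∣ d ∧ p ∣ (q - 1)),
          (#{i ∈ s | q ∣ f i} - 1) * padicValNat p (q - 1) := by
  have hprimes : ∀ q,
      ∑ᶠ (_ : q.Prime ∧ ¬ q ∣ d), (#{i ∈ s | q ∣ f i} - 1) * padicValNat p (q - 1) =
        ∑ᶠ (_ : q.Prime ∧ ¬ q ∣ d ∧ p ∣ (q - 1)),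
          (#{i ∈ s | q ∣ f i} - 1) * padicValNat p (q - 1) := by
    intro q
    by_cases hpq : p ∣ q - 1
    · simp only [hpq, and_true]
    · simp [padicValNat.eq_zero_of_not_dvd hpq]
  rw [lcm_mul_left_of_nonempty hs, padicValNat_totient_mul_of_dvd hp hd hpd
      (lcm_ne_zero_iff.2 hf), sum_congr rfl fun i hi => padicValNat_totient_mul_of_dvd hp hd hpd
      (hf i hi), sum_add_distrib, sum_add_distrib, sum_const, smul_eq_mul,
    sum_padicValNat_eq_padicValNat_lcm_add_finsum hp hf, sum_sum_primeFactors_sdiff_eq hd hf,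
    finsum_congr hprimes]
  obtain ⟨k, hk⟩ := Nat.exists_eq_add_of_le' hs.card_pos
  rw [hk, Nat.add_sub_cancel]
  ring

theorem padicValRat_prod_totient_div_totient {ι : Type*} {s : Finset ι} {m : ι → ℕ} {p L : ℕ}
    (hp : p.Prime) (hm : ∀ i ∈ s, m i ≠ 0) (hL : L ≠ 0) :
    padicValRat p ((∏ i ∈ s, ((m i).totient : ℚ)) / L.totient) =
      ∑ i ∈ s, (padicValNat p (m i).totient : ℤ) - padicValNat p L.totient := by
  have : Fact p.Prime := ⟨hp⟩
  have hφ : ∀ i ∈ s, (m i).totient ≠ 0 := fun i hi => (Nat.totient_pos.2 (Nat.pos_of_ne_zero (hm i hi))).ne'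
  rw [← Nat.cast_prod, padicValRat.div (by exact_mod_cast prod_ne_zero_iff.2 hφ)
      (by exact_mod_cast (Nat.totient_pos.2 (by omega)).ne'), padicValRat.of_nat,
    padicValRat.of_nat, padicValNat_finset_prod hp hφ, Nat.cast_sum]

theorem vp_gkphi_formula_dvd_d_general (k a b c : ℕ)
    (ha : 1 ≤ a)
    (d a' b' : ℕ) (hd : d = Nat.gcd a b) (ha' : a' = a / d) (hb' : b' = b / d)
    (p : ℕ) (hp : p.Prime) (hpd : p ∣ d) :
    ∀ n : ℕ, 0 < n →
      padicValRat p (gkphi k a b c n) =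
        (k : ℤ) * padicValNat p d.totient
        + ((∑ᶠ (e : ℕ) (_ : 1 ≤ e),
            (((Finset.range (k + 1)).filter
                fun i => p ^ e ∣ b' + a' * (n + i * c)).card - 1) : ℕ) : ℤ)
        + ((∑ᶠ (q : ℕ) (_ : q.Prime ∧ ¬ q ∣ d ∧ p ∣ (q - 1)),
            ((((Finset.range (k + 1)).filter
                fun i => q ∣ b' + a' * (n + i * c)).card - 1)
              * padicValNat p (q - 1)) : ℕ) : ℤ) := by
  intro n hn
  have hd0 : d ≠ 0 := hd ▸ (Nat.gcd_pos_of_pos_left b ha).ne'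
  have hterm : ∀ i, b + a * (n + i * c) = d * (b' + a' * (n + i * c)) := fun i => by
    rw [ha', hb', mul_add d, Nat.mul_div_cancel' (hd ▸ Nat.gcd_dvd_right a b), ← mul_assoc,
      Nat.mul_div_cancel' (hd ▸ Nat.gcd_dvd_left a b)]
  have hS : ∀ i, b' + a' * (n + i * c) ≠ 0 := fun i h => by
    have := hterm i
    rw [h, mul_zero] at this
    have : 0 < a * (n + i * c) := Nat.mul_pos ha (by omega)
    omega
  have hm : ∀ i, b + a * (n + i * c) ≠ 0 := fun i => hterm i ▸ mul_ne_zero hd0 (hS i)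
  rw [gkphi, padicValRat_prod_totient_div_totient hp (fun i _ => hm i)
    (lcm_ne_zero_iff.2 fun i _ => hm i)]
  simp only [hterm]
  rw [← Nat.cast_sum, sum_padicValNat_totient_mul_eq hp hd0 hpd nonempty_range_add_one
    fun i _ => hS i, card_range, Nat.add_sub_cancel]
  push_cast
  ring

/-- Formula (3.2): for a prime `p ∣ d`, where `d = gcd (a, b)`, `a' = a / d`,
`b' = b / d`, for all positive `n`:
`v_p (g_{k,φ} (n)) = k v_p (φ (d)) + Σ_{e ≥ 1} max (0, #{m ∈ S (n) : p^e ∣ m} − 1)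
 + Σ_{q prime, q ∤ d, p ∣ q − 1} max (0, #{m ∈ S (n) : q ∣ m} − 1) ⬝ v_p (q − 1)`,
where `S (n) = {b' + a' (n + i c) : 0 ≤ i ≤ k}`. -/
theorem vp_gkphi_formula_dvd_d (k a b c : ℕ)
    (hk : 1 ≤ k) (ha : 1 ≤ a) (hc : 1 ≤ c)
    (d a' b' : ℕ) (hd : d = Nat.gcd a b) (ha' : a' = a / d) (hb' : b' = b / d)
    (p : ℕ) (hp : p.Prime) (hpd : p ∣ d) :
    ∀ n : ℕ, 0 < n →
      padicValRat p (gkphi k a b c n) =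
        (k : ℤ) * padicValNat p d.totient
        + ((∑ᶠ (e : ℕ) (_ : 1 ≤ e),
            (((Finset.range (k + 1)).filter
                fun i => p ^ e ∣ b' + a' * (n + i * c)).card - 1) : ℕ) : ℤ)
        + ((∑ᶠ (q : ℕ) (_ : q.Prime ∧ ¬ q ∣ d ∧ p ∣ (q - 1)),
            ((((Finset.range (k + 1)).filter
                fun i => q ∣ b' + a' * (n + i * c)).card - 1)
              * padicValNat p (q - 1)) : ℕ) : ℤ) :=
  vp_gkphi_formula_dvd_d_general k a b c ha d a' b' hd ha' hb' p hp hpd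
end

section
/- Let k ≥ 1, a ≥ 1, b ≥ 0 and c ≥ 1 be integers, and let p be a prime such that p ≤ c·L_k and p ∤ c·L_k. Then the smallest period of g_{p,k,φ} is P_{p,k,φ} = ∏_q q, where the product ranges over all primes q such that q | c, q ∤ a and p | (q − 1). -/
/-!
Write `N i = b + a (n + i c)`. By multiplicativity of `φ`, `v_p (g n)` is a sum over primes `q`
of `∑ i, v_p (φ (q ^ v_q (N i))) - v_p (φ (q ^ max_i v_q (N i)))`. Since `p ∤ c` and `k < p`, the
term `q = p` does not depend on `n`: after dividing out `gcd a b`, at most one `N i` is a multiple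
of `p`. Neither does the term of a prime `q ∣ a`, nor that of a prime `q ∤ a c` with `p ∣ q - 1`
(then `k < q`, so at most one `N i` is a multiple of `q`). Each remaining prime `q ∣ c`, `q ∤ a`,
`p ∣ q - 1` contributes `k v_p (q - 1) > 0` exactly when `q ∣ b + a n`, a condition of period `q`.
So their product is a period, and a minimal one: from an `n` with all of them dividing `b + a n`,
a shift by `T` gains no contribution and loses that of every such `q ∤ T`.
-/

open Finset
open scoped Nat

namespace Nat

theorem factorization_totient_eq_sum {N : ℕ} (hN : N ≠ 0) {U : Finset ℕ}
    (hU : N.primeFactors ⊆ U) (p : ℕ) :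
    (φ N).factorization p = ∑ q ∈ U, (φ (q ^ N.factorization q)).factorization p := by
  rw [multiplicative_factorization φ (fun _ _ => totient_mul) totient_one hN, Finsupp.prod,
    support_factorization, factorization_prod fun q hq => (totient_pos.2 <|
      pow_pos (prime_of_mem_primeFactors hq).pos _).ne', Finset.sum_apply']
  refine sum_subset hU fun q _ hq => ?_
  rw [← support_factorization, Finsupp.notMem_support_iff] at hq
  simp [hq]

theorem factorization_totient_prime_pow_self {p : ℕ} (hp : p.Prime) (e : ℕ) :
    (φ (p ^ e)).factorization p = e - 1 := by
  rcases e with _ | e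
  · simp
  have hp1 : p - 1 ≠ 0 := by have := hp.two_le; omega
  rw [totient_prime_pow_succ hp, factorization_mul (pow_ne_zero _ hp.ne_zero) hp1,
    Finsupp.add_apply, hp.factorization_pow, Finsupp.single_eq_same,
    factorization_eq_zero_of_not_dvd fun h => hp1 (eq_zero_of_dvd_of_lt h (by omega))]
  simp

theorem factorization_totient_prime_pow_of_ne {p q : ℕ} (hq : q.Prime) (hqp : q ≠ p) (e : ℕ) :
    (φ (q ^ e)).factorization p = if e = 0 then 0 else (q - 1).factorization p := by
  rcases e with _ | e
  · simp
  rw [totient_prime_pow_succ hq,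
    factorization_mul (pow_ne_zero _ hq.ne_zero) (by have := hq.two_le; omega),
    Finsupp.add_apply, hq.factorization_pow, Finsupp.single_eq_of_ne hqp.symm]
  simp

end Nat

section SupDefect

variable {ι : Type*} {s : Finset ι} {e : ι → ℕ} {f : ℕ → ℕ}

theorem Finset.sum_comp_eq_comp_sup (hf : f 0 = 0)
    (he : ∀ i ∈ s, ∀ j ∈ s, e i ≠ 0 → e j ≠ 0 → i = j) :
    ∑ i ∈ s, f (e i) = f (s.sup e) := by
  rcases s.eq_empty_or_nonempty with rfl | hs
  · simp [hf]
  obtain ⟨i₀, hi₀, hsup⟩ := s.exists_mem_eq_sup hs e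
  rw [hsup, sum_eq_single_of_mem i₀ hi₀ fun j hj hji => ?_]
  suffices e j = 0 by rw [this, hf]
  by_contra hej
  have := hsup ▸ s.le_sup (f := e) hj
  exact hji (he j hj i₀ hi₀ hej (by omega))

def supDefect (f : ℕ → ℕ) (s : Finset ι) (e : ι → ℕ) : ℤ :=
  ∑ i ∈ s, (f (e i) : ℤ) - f (s.sup e)

theorem supDefect_eq_zero (hf : f 0 = 0) (he : ∀ i ∈ s, ∀ j ∈ s, e i ≠ 0 → e j ≠ 0 → i = j) :
    supDefect f s e = 0 := by
  rw [supDefect, ← Nat.cast_sum, sum_comp_eq_comp_sup hf he, sub_self]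

theorem supDefect_of_forall_eq (hs : s.Nonempty) {w : ℕ} (h : ∀ i ∈ s, f (e i) = w) :
    supDefect f s e = (#s - 1 : ℤ) * w := by
  obtain ⟨i₀, hi₀, hsup⟩ := s.exists_mem_eq_sup hs e
  rw [supDefect, sum_congr rfl fun i hi => congrArg Nat.cast (h i hi), hsup, h i₀ hi₀, sum_const,
    nsmul_eq_mul]
  ring

theorem supDefect_pred_of_add (hs : s.Nonempty) (m : ℕ)
    (he : ∀ i ∈ s, ∀ j ∈ s, e i ≠ 0 → e j ≠ 0 → i = j) :
    supDefect (· - 1) s (fun i => m + e i) = (#s - 1 : ℤ) * (m - 1 : ℕ) := by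
  rcases m with _ | m
  · simpa using supDefect_eq_zero (f := (· - 1)) rfl he
  have hsup : s.sup (fun i => m + 1 + e i) = m + 1 + s.sup e :=
    (apply_sup_eq_sup_comp_of_nonempty (monotone_id.const_add (m + 1)) hs).symm
  have hsum : ∑ i ∈ s, (e i : ℤ) = s.sup e := by
    exact_mod_cast sum_comp_eq_comp_sup (f := id) rfl he
  have hpred : ∀ x, ((m + 1 + x - 1 : ℕ) : ℤ) = m + x := fun x => by omega
  simp only [supDefect, hsup, hpred, sum_add_distrib, hsum, sum_const, nsmul_eq_mul]
  push_cast
  ring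

end SupDefect

theorem Nat.eq_of_prime_dvd_add_mul {q x d i j : ℕ} (hq : q.Prime) (hd : ¬ q ∣ d)
    (hi : i < q) (hj : j < q) (hdi : q ∣ x + i * d) (hdj : q ∣ x + j * d) : i = j := by
  have := Fact.mk hq
  rw [← ZMod.natCast_eq_zero_iff] at hd hdi hdj
  push_cast at hdi hdj
  have hij : (i : ZMod q) = j := mul_right_cancel₀ hd (by linear_combination hdi - hdj)
  rwa [ZMod.natCast_eq_natCast_iff', Nat.mod_eq_of_lt hi, Nat.mod_eq_of_lt hj] at hij

theorem Nat.exists_pos_dvd_add_mul {a m : ℕ} (b : ℕ) (h : a.Coprime m) (hm : 0 < m) :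
    ∃ n, 0 < n ∧ m ∣ b + a * n := by
  have : NeZero m := ⟨hm.ne'⟩
  let u := ZMod.unitOfCoprime a h
  refine ⟨((-b : ZMod m) * ↑u⁻¹).val + m, by omega, ?_⟩
  rw [← ZMod.natCast_eq_zero_iff]
  push_cast
  rw [ZMod.natCast_val, ZMod.cast_id', id, ZMod.natCast_self, add_zero,
    ← ZMod.coe_unitOfCoprime a h]
  linear_combination (-(b : ZMod m)) * u.mul_inv

theorem Nat.dvd_add_mul_add_iff {q a b n T : ℕ} (h : q ∣ a * T) :
    q ∣ b + a * (n + T) ↔ q ∣ b + a * n := by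
  rw [mul_add, ← add_assoc, Nat.dvd_add_left h]

theorem isLeast_periods_sum_ite_dvd {a b : ℕ} {S : Finset ℕ} (hS : ∀ q ∈ S, q.Prime ∧ ¬ q ∣ a)
    {w : ℕ → ℤ} (hw : ∀ q ∈ S, 0 < w q) :
    IsLeast {T : ℕ | 0 < T ∧ ∀ n : ℕ, 0 < n →
        ∑ q ∈ S, w q * (if q ∣ b + a * (n + T) then 1 else 0) =
          ∑ q ∈ S, w q * (if q ∣ b + a * n then 1 else 0)} (∏ q ∈ S, q) := by
  have hP : 0 < ∏ q ∈ S, q := prod_pos fun q hq => (hS q hq).1.pos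
  refine ⟨⟨hP, fun n _ => sum_congr rfl fun q hq => ?_⟩, fun T ⟨hT, hper⟩ => ?_⟩
  · simp only [Nat.dvd_add_mul_add_iff ((dvd_prod_of_mem (fun q => q) hq).mul_left a)]
  refine Nat.le_of_dvd hT (prod_primes_dvd T (fun q hq => (hS q hq).1.prime) fun q hq => ?_)
  by_contra hqT
  have hcop : a.Coprime (∏ q ∈ S, q) := Nat.Coprime.prod_right fun q hq =>
    (Nat.coprime_comm.mp ((hS q hq).1.coprime_iff_not_dvd.mpr (hS q hq).2))
  obtain ⟨n, hn, hdvd⟩ := Nat.exists_pos_dvd_add_mul b hcop hP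
  have hdvd_n : ∀ q ∈ S, q ∣ b + a * n := fun q hq => (dvd_prod_of_mem _ hq).trans hdvd
  refine (hper n hn).not_lt (sum_lt_sum (fun q' hq' => ?_) ⟨q, hq, ?_⟩)
  · rw [if_pos (hdvd_n q' hq')]
    split_ifs <;> linarith [hw q' hq']
  · have hndvd : ¬ q ∣ b + a * (n + T) := fun h => by
      rw [mul_add, ← add_assoc] at h
      rcases (hS q hq).1.dvd_mul.mp ((Nat.dvd_add_right (hdvd_n q hq)).mp h) with h | h
      exacts [(hS q hq).2 h, hqT h]
    rw [if_pos (hdvd_n q hq), if_neg hndvd]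
    linarith [hw q hq]

namespace Gkphi

variable {p k a b c n m q : ℕ}

def localTerm (p k a b c n q : ℕ) : ℤ :=
  supDefect (fun e => (φ (q ^ e)).factorization p) (range (k + 1))
    fun i => (b + a * (n + i * c)).factorization q

theorem term_ne_zero (ha : 0 < a) (hn : 0 < n) (i : ℕ) : b + a * (n + i * c) ≠ 0 := by
  positivity

theorem padicValRat_gkphi_eq_sum_localTerm (hp : p.Prime) (ha : 0 < a) (hn : 0 < n) {U : Finset ℕ}
    (hU : ((range (k + 1)).lcm fun i => b + a * (n + i * c)).primeFactors ⊆ U) :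
    padicValRat p (gkphi k a b c n) = ∑ q ∈ U, localTerm p k a b c n q := by
  have := Fact.mk hp
  have hN := term_ne_zero (b := b) (c := c) ha hn
  have hL : ((range (k + 1)).lcm fun i => b + a * (n + i * c)) ≠ 0 := by
    rw [Ne, Finset.lcm_eq_zero_iff]
    exact fun ⟨i, _, h⟩ => hN i h
  have hφN : ∀ i ∈ range (k + 1), φ (b + a * (n + i * c)) ≠ 0 := fun i _ =>
    (Nat.totient_pos.2 (Nat.pos_of_ne_zero (hN i))).ne'
  have hφL := (Nat.totient_pos.2 (Nat.pos_of_ne_zero hL)).ne'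
  have hprod : ∏ i ∈ range (k + 1), φ (b + a * (n + i * c)) ≠ 0 := prod_ne_zero_iff.2 hφN
  rw [gkphi, ← Nat.cast_prod, padicValRat.div (by exact_mod_cast hprod) (by exact_mod_cast hφL),
    padicValRat.of_nat, padicValRat.of_nat, ← Nat.factorization_def _ hp,
    ← Nat.factorization_def _ hp, Nat.factorization_prod hφN, Finset.sum_apply',
    Nat.factorization_totient_eq_sum hL hU,
    sum_congr rfl fun i hi => Nat.factorization_totient_eq_sum (hN i)
      ((Nat.primeFactors_mono (dvd_lcm hi) hL).trans hU) p, sum_comm]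
  simp only [Finset.factorization_lcm fun i _ => hN i]
  push_cast
  rw [← sum_sub_distrib]
  rfl

theorem eq_of_factorization_ne_zero (hq : q.Prime) (hac : ¬ q ∣ a * c) (hkq : k < q) :
    ∀ i ∈ range (k + 1), ∀ j ∈ range (k + 1), (b + a * (n + i * c)).factorization q ≠ 0 →
      (b + a * (n + j * c)).factorization q ≠ 0 → i = j := by
  intro i hi j hj hqi hqj
  rw [mem_range] at hi hj
  refine Nat.eq_of_prime_dvd_add_mul (x := b + a * n) hq hac (by omega) (by omega) ?_ ?_
  · convert Nat.dvd_of_factorization_pos hqi using 1; ring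
  · convert Nat.dvd_of_factorization_pos hqj using 1; ring

theorem localTerm_self (hp : p.Prime) (hpc : ¬ p ∣ c) (hkp : k < p) (ha : 0 < a) (hn : 0 < n) :
    localTerm p k a b c n p = k * ((a.gcd b).factorization p - 1 : ℕ) := by
  obtain ⟨a', b', hcop, ha', hb'⟩ := Nat.exists_coprime a b
  have hg : a.gcd b ≠ 0 := (Nat.gcd_pos_of_pos_left b ha).ne'
  have ha'0 : 0 < a' := Nat.pos_of_ne_zero fun h => by simp [h] at ha'; omega
  have hsplit : ∀ i, (b + a * (n + i * c)).factorization p =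
      (a.gcd b).factorization p + (b' + a' * (n + i * c)).factorization p := fun i => by
    rw [show b + a * (n + i * c) = a.gcd b * (b' + a' * (n + i * c)) by
        generalize a.gcd b = g at ha' hb' ⊢; rw [ha', hb']; ring,
      Nat.factorization_mul hg (term_ne_zero ha'0 hn i), Finsupp.add_apply]
  -- `p` cannot divide both `a'` and `b'`, so at most one `b' + a' (n + i c)` is a multiple of `p`
  have huniq : ∀ i ∈ range (k + 1), ∀ j ∈ range (k + 1),
      (b' + a' * (n + i * c)).factorization p ≠ 0 →
        (b' + a' * (n + j * c)).factorization p ≠ 0 → i = j := by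
    by_cases hpa' : p ∣ a'
    · intro i _ j _ hpi
      have hpb' : p ∣ b' :=
        (Nat.dvd_add_left (hpa'.mul_right _)).mp (Nat.dvd_of_factorization_pos hpi)
      exact absurd (Nat.eq_one_of_dvd_coprimes hcop hpa' hpb') hp.one_lt.ne'
    · exact eq_of_factorization_ne_zero hp (by rw [hp.dvd_mul]; tauto) hkp
  simp only [localTerm, Nat.factorization_totient_prime_pow_self hp, hsplit]
  rw [supDefect_pred_of_add nonempty_range_add_one _ huniq, card_range]
  push_cast
  ring

theorem localTerm_of_dvd_mul (hq : q.Prime) (hqp : q ≠ p) (hqac : q ∣ a * c) (ha : 0 < a)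
    (hn : 0 < n) :
    localTerm p k a b c n q = k * (q - 1).factorization p * if q ∣ b + a * n then 1 else 0 := by
  have hiff : ∀ i, q ∣ b + a * (n + i * c) ↔ q ∣ b + a * n := fun i => by
    rw [show b + a * (n + i * c) = b + a * n + a * c * i by ring]
    exact Nat.dvd_add_left (hqac.mul_right i)
  have hf : ∀ i ∈ range (k + 1), (φ (q ^ (b + a * (n + i * c)).factorization q)).factorization p =
      if q ∣ b + a * n then (q - 1).factorization p else 0 := fun i _ => by
    simp only [Nat.factorization_totient_prime_pow_of_ne hq hqp, Nat.factorization_eq_zero_iff,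
      ← hiff i, term_ne_zero ha hn i, hq]
    split_ifs <;> tauto
  rw [localTerm, supDefect_of_forall_eq nonempty_range_add_one hf, card_range]
  split_ifs <;> push_cast <;> ring

theorem localTerm_eq_zero_of_not_dvd_mul (hq : q.Prime) (hqac : ¬ q ∣ a * c) (hkq : k < q) :
    localTerm p k a b c n q = 0 :=
  supDefect_eq_zero (by simp) (eq_of_factorization_ne_zero hq hqac hkq)

theorem localTerm_eq_zero_of_not_dvd_pred (hq : q.Prime) (hqp : q ≠ p) (h : ¬ p ∣ q - 1) :
    localTerm p k a b c n q = 0 := by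
  simp [localTerm, supDefect, Nat.factorization_totient_prime_pow_of_ne hq hqp,
    Nat.factorization_eq_zero_of_not_dvd h]

def periodPrimes (p a c : ℕ) : Finset ℕ :=
  c.divisors.filter fun q => q.Prime ∧ ¬ q ∣ a ∧ p ∣ q - 1

theorem mem_periodPrimes (hc : c ≠ 0) :
    q ∈ periodPrimes p a c ↔ q ∣ c ∧ q.Prime ∧ ¬ q ∣ a ∧ p ∣ q - 1 := by
  simp [periodPrimes, hc]

theorem localTerm_eq_of_not_mem (hp : p.Prime) (hq : q.Prime) (hpc : ¬ p ∣ c) (hkp : k < p)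
    (ha : 0 < a) (hc : c ≠ 0) (hn : 0 < n) (hm : 0 < m) (hqS : q ∉ periodPrimes p a c) :
    localTerm p k a b c n q = localTerm p k a b c m q := by
  by_cases hqp : q = p
  · subst hqp
    rw [localTerm_self hp hpc hkp ha hn, localTerm_self hp hpc hkp ha hm]
  by_cases hpq : p ∣ q - 1
  swap
  · rw [localTerm_eq_zero_of_not_dvd_pred hq hqp hpq, localTerm_eq_zero_of_not_dvd_pred hq hqp hpq]
  by_cases hqa : q ∣ a
  · rw [localTerm_of_dvd_mul hq hqp (hqa.mul_right c) ha hn,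
      localTerm_of_dvd_mul hq hqp (hqa.mul_right c) ha hm]
    simp only [Nat.dvd_add_left (hqa.mul_right _)]
  have hqac : ¬ q ∣ a * c := by
    rw [hq.dvd_mul]
    exact fun h => h.elim hqa fun hqc => hqS ((mem_periodPrimes hc).2 ⟨hqc, hq, hqa, hpq⟩)
  have hkq : k < q := by
    have := Nat.le_of_dvd (by have := hq.two_le; omega) hpq
    omega
  rw [localTerm_eq_zero_of_not_dvd_mul hq hqac hkq, localTerm_eq_zero_of_not_dvd_mul hq hqac hkq]

theorem padicValRat_gkphi_sub (hp : p.Prime) (hpc : ¬ p ∣ c) (hkp : k < p) (ha : 0 < a) (hc : 0 < c)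
    (hn : 0 < n) (hm : 0 < m) :
    padicValRat p (gkphi k a b c n) - padicValRat p (gkphi k a b c m) =
      ∑ q ∈ periodPrimes p a c, (k * (q - 1).factorization p : ℤ) *
          (if q ∣ b + a * n then 1 else 0) -
        ∑ q ∈ periodPrimes p a c, (k * (q - 1).factorization p : ℤ) *
          (if q ∣ b + a * m then 1 else 0) := by
  set U := ((range (k + 1)).lcm fun i => b + a * (n + i * c)).primeFactors ∪
    ((range (k + 1)).lcm fun i => b + a * (m + i * c)).primeFactors ∪ periodPrimes p a c
  have hUprime : ∀ q ∈ U, q.Prime := fun q hq => by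
    simp only [U, mem_union, mem_periodPrimes hc.ne'] at hq
    rcases hq with (hq | hq) | hq
    exacts [Nat.prime_of_mem_primeFactors hq, Nat.prime_of_mem_primeFactors hq, hq.2.1]
  rw [padicValRat_gkphi_eq_sum_localTerm hp ha hn (subset_union_left.trans subset_union_left),
    padicValRat_gkphi_eq_sum_localTerm hp ha hm (subset_union_right.trans subset_union_left),
    ← sum_sub_distrib, ← sum_sub_distrib, ← sum_subset subset_union_right fun q hqU hqS => ?_]
  · refine sum_congr rfl fun q hq => ?_
    obtain ⟨hqc, hq, -, -⟩ := (mem_periodPrimes hc.ne').1 hq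
    have hqp : q ≠ p := by rintro rfl; exact hpc hqc
    rw [localTerm_of_dvd_mul hq hqp (hqc.mul_left a) ha hn,
      localTerm_of_dvd_mul hq hqp (hqc.mul_left a) ha hm]
  · rw [localTerm_eq_of_not_mem hp (hUprime q hqU) hpc hkp ha hc.ne' hn hm hqS, sub_self]

end Gkphi

open Gkphi in
theorem smallest_local_period_not_dvd_cLk_general (k a b c : ℕ)
    (hk : 1 ≤ k) (ha : 1 ≤ a) (hc : 1 ≤ c)
    (p : ℕ) (hp : p.Prime) (hpndvd : ¬ p ∣ c * Lk k) :
    IsLeast {T : ℕ | 0 < T ∧ ∀ n : ℕ, 0 < n →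
        padicValRat p (gkphi k a b c (n + T)) = padicValRat p (gkphi k a b c n)}
      (∏ q ∈ c.divisors.filter (fun q => q.Prime ∧ ¬ q ∣ a ∧ p ∣ (q - 1)), q) := by
  have hpc : ¬ p ∣ c := fun h => hpndvd (h.mul_right _)
  have hkp : k < p := by
    by_contra! hpk
    exact hpndvd ((dvd_lcm (f := id) (mem_Icc.2 ⟨hp.one_lt.le, hpk⟩)).mul_left c)
  have hS : ∀ q ∈ periodPrimes p a c, q.Prime ∧ ¬ q ∣ a := fun q hq =>
    ((mem_periodPrimes (by omega)).1 hq).2.imp_right And.left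
  have hw : ∀ q ∈ periodPrimes p a c, 0 < (k * (q - 1).factorization p : ℤ) := fun q hq => by
    obtain ⟨-, hq, -, hpq⟩ := (mem_periodPrimes (by omega)).1 hq
    have := hp.factorization_pos_of_dvd (by have := hq.two_le; omega) hpq
    positivity
  change IsLeast _ (∏ q ∈ periodPrimes p a c, q)
  convert isLeast_periods_sum_ite_dvd (b := b) hS hw using 2
  ext T
  refine and_congr_right fun _ => forall₂_congr fun n hn => ?_
  rw [← sub_eq_zero, padicValRat_gkphi_sub hp hpc hkp ha hc (by omega) hn, sub_eq_zero]

/-- Lemma 3.4: for a prime `p ≤ c L_k` with `p ∤ c L_k`, the smallest period of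
`g_{p,k,φ} (n) = v_p (g_{k,φ} (n))` is `∏_{q prime, q ∣ c, q ∤ a, p ∣ q − 1} q`. -/
theorem smallest_local_period_not_dvd_cLk (k a b c : ℕ)
    (hk : 1 ≤ k) (ha : 1 ≤ a) (hc : 1 ≤ c)
    (p : ℕ) (hp : p.Prime) (hple : p ≤ c * Lk k) (hpndvd : ¬ p ∣ c * Lk k) :
    IsLeast {T : ℕ | 0 < T ∧ ∀ n : ℕ, 0 < n →
        padicValRat p (gkphi k a b c (n + T)) = padicValRat p (gkphi k a b c n)}
      (∏ q ∈ c.divisors.filter (fun q => q.Prime ∧ ¬ q ∣ a ∧ p ∣ (q - 1)), q) :=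
  smallest_local_period_not_dvd_cLk_general k a b c hk ha hc p hp hpndvd
end

section
/- Let k ≥ 1, a ≥ 1, b ≥ 0 and c ≥ 1 be integers, d := gcd(a, b), a' := a/d, and let p be a prime such that p | c·L_k and p | a'. Then the smallest period of g_{p,k,φ} is P_{p,k,φ} = (∏_{q ∈ A} q) · (∏_{q ∈ B} q), where A is the set of primes q with q ∤ ac, q | L_k, p | (q − 1) and k + 1 ≢ 0 (mod q), and B is the set of primes q with q ∤ a, q | c and p | (q − 1). -/
open Finset Function

section Periods

variable {α : Type*} {f : ℕ → α} {q T : ℕ}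

lemma apply_add_mul_eq_of_forall_apply_add_eq (hT : ∀ n, 0 < n → f (n + T) = f n)
    (j : ℕ) {n : ℕ} (hn : 0 < n) : f (n + j * T) = f n := by
  induction j with
  | zero => simp
  | succ j ih => rw [Nat.succ_mul, ← add_assoc, hT _ (by omega), ih]

lemma Function.Periodic.eq_of_forall_apply_add_eq (hf : Periodic f q) (hq : 0 < q)
    (hTq : T.Coprime q) (hT : ∀ n, 0 < n → f (n + T) = f n) (n m : ℕ) : f n = f m := by
  have : NeZero q := ⟨hq.ne'⟩
  set j := (((m : ZMod q) - n) * ↑(ZMod.unitOfCoprime T hTq)⁻¹).val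
  have hj : ((n + q + j * T : ℕ) : ZMod q) = m := by
    push_cast
    rw [ZMod.natCast_self, ZMod.natCast_zmod_val, ← ZMod.coe_unitOfCoprime T hTq, mul_assoc,
      Units.inv_mul, mul_one, add_zero, add_sub_cancel]
  calc f n = f (n + q + j * T) := by
        rw [apply_add_mul_eq_of_forall_apply_add_eq hT j (by omega), hf n]
    _ = f m := by
        rw [← hf.map_mod_nat, ← hf.map_mod_nat m, (ZMod.natCast_eq_natCast_iff' _ _ _).mp hj]

lemma Function.Periodic.of_dvd (hf : Periodic f q) (hqT : q ∣ T) : Periodic f T := by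
  obtain ⟨m, rfl⟩ := hqT
  intro n
  simpa [mul_comm] using hf.nat_mul m n

theorem isLeast_periods_sum {M : Type*} [AddCancelCommMonoid M] {S U : Finset ℕ}
    (h : ℕ → ℕ → M) (hUS : U ⊆ S) (hU : ∀ q ∈ U, q.Prime)
    (hper : ∀ q ∈ U, Periodic (h q) q) (hconst : ∀ q ∈ S, q ∉ U → ∀ n m, h q n = h q m)
    (hnonconst : ∀ q ∈ U, ∃ n m, h q n ≠ h q m) :
    IsLeast {T | 0 < T ∧ ∀ n, 0 < n → ∑ q ∈ S, h q (n + T) = ∑ q ∈ S, h q n} (∏ q ∈ U, q) := by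
  have hshift : ∀ T, ∀ q ∈ S, (q ∈ U → q ∣ T) → Periodic (h q) T := fun T q hqS hqT n => by
    by_cases hqU : q ∈ U
    · exact (hper q hqU).of_dvd (hqT hqU) n
    · exact hconst q hqS hqU _ _
  refine ⟨⟨prod_pos fun q hq => (hU q hq).pos, fun n _ => sum_congr rfl fun q hq =>
    hshift _ q hq (fun hqU => dvd_prod_of_mem _ hqU) n⟩, fun T ⟨hT0, hT⟩ => ?_⟩
  refine Nat.le_of_dvd hT0 (prod_primes_dvd T (fun q hq => (hU q hq).prime) fun q₀ hq₀ => ?_)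
  by_contra hq₀T
  set P := ∏ q ∈ U.erase q₀, q
  have hq₀P : ¬ q₀ ∣ P := fun hdvd => by
    obtain ⟨q, hq, hq₀q⟩ := (Prime.dvd_finsetProd_iff (hU q₀ hq₀).prime _).mp hdvd
    exact (mem_erase.mp hq).1
      ((Nat.prime_dvd_prime_iff_eq (hU q₀ hq₀) (hU q (mem_of_mem_erase hq))).mp hq₀q).symm
  -- every summand but `h q₀` is invariant under the shift `P * T`, hence so is `h q₀`
  have hPT : ∀ n, 0 < n → h q₀ (n + P * T) = h q₀ n := fun n hn => by
    have hrest : ∀ q ∈ S.erase q₀, Periodic (h q) (P * T) := fun q hq =>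
      hshift _ q (mem_of_mem_erase hq) fun hqU =>
        (dvd_prod_of_mem _ (mem_erase.mpr ⟨(mem_erase.mp hq).1, hqU⟩)).mul_right T
    have hsum := apply_add_mul_eq_of_forall_apply_add_eq (f := fun n => ∑ q ∈ S, h q n) hT P hn
    rw [← add_sum_erase S _ (hUS hq₀), ← add_sum_erase S _ (hUS hq₀),
      sum_congr rfl fun q hq => hrest q hq n] at hsum
    exact add_right_cancel hsum
  have hcop : (P * T).Coprime q₀ :=
    Nat.Coprime.mul_left ((Nat.coprime_comm.mp ((hU q₀ hq₀).coprime_iff_not_dvd.mpr hq₀P)))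
      (Nat.coprime_comm.mp ((hU q₀ hq₀).coprime_iff_not_dvd.mpr hq₀T))
  obtain ⟨n, m, hnm⟩ := hnonconst q₀ hq₀
  exact hnm ((hper q₀ hq₀).eq_of_forall_apply_add_eq (hU q₀ hq₀).pos hcop hPT n m)

end Periods

section Totient

lemma factorization_totient_apply {m : ℕ} (hm : m ≠ 0) (p : ℕ) :
    (m.totient).factorization p =
      (m.factorization p - 1) + ∑ q ∈ m.primeFactors, (q - 1).factorization p := by
  have hterm : ∀ q ∈ m.primeFactors,
      (q ^ (m.factorization q - 1) * (q - 1)).factorization p =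
        (if q = p then m.factorization q - 1 else 0) + (q - 1).factorization p := by
    intro q hq
    have hq' := Nat.prime_of_mem_primeFactors hq
    rw [Nat.factorization_mul (pow_ne_zero _ hq'.ne_zero) (by have := hq'.two_le; omega),
      Finsupp.add_apply, hq'.factorization_pow, Finsupp.single_apply]
  rw [Nat.totient_eq_prod_factorization hm, Finsupp.prod, Nat.support_factorization,
    Nat.factorization_prod fun q hq => ?_, sum_apply', sum_congr rfl hterm, sum_add_distrib,
    sum_ite_eq']
  · split_ifs with hp
    · rfl
    · rw [← Nat.support_factorization, Finsupp.notMem_support_iff] at hp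
      rw [hp, zero_tsub]
  · have hq' := Nat.prime_of_mem_primeFactors hq
    exact mul_ne_zero (pow_ne_zero _ hq'.ne_zero) (by have := hq'.two_le; omega)

lemma card_filter_dvd_pos {ι : Type*} {s : Finset ι} {f : ι → ℕ} (hf : ∀ i ∈ s, f i ≠ 0)
    {q : ℕ} (hq : q ∈ (s.lcm f).primeFactors) : 0 < #{i ∈ s | q ∣ f i} := by
  obtain ⟨hq, hqL, hL⟩ := Nat.mem_primeFactors.mp hq
  have hpos := hq.factorization_pos_of_dvd hL hqL
  rw [Finset.factorization_lcm hf, Finset.lt_sup_iff] at hpos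
  obtain ⟨i, hi, hqi⟩ := hpos
  exact card_pos.mpr ⟨i, mem_filter.mpr ⟨hi, Nat.dvd_of_factorization_pos hqi.ne'⟩⟩

theorem sum_factorization_totient {ι : Type*} (s : Finset ι) (f : ι → ℕ)
    (hf : ∀ i ∈ s, f i ≠ 0) (p : ℕ) :
    ∑ i ∈ s, (f i).totient.factorization p + ((s.lcm f).factorization p - 1) =
      (s.lcm f).totient.factorization p + ∑ i ∈ s, ((f i).factorization p - 1) +
        ∑ q ∈ (s.lcm f).primeFactors, (q - 1).factorization p * (#{i ∈ s | q ∣ f i} - 1) := by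
  set L := s.lcm f
  have hL : L ≠ 0 := by simpa [L, Finset.lcm_eq_zero_iff] using hf
  have hprimes : ∀ i ∈ s, ∑ q ∈ (f i).primeFactors, (q - 1).factorization p =
      ∑ q ∈ L.primeFactors, if q ∣ f i then (q - 1).factorization p else 0 := fun i hi => by
    rw [← sum_filter, Nat.primeFactors_filter_dvd_of_dvd hL (dvd_lcm hi)]
  have hsplit : ∀ q ∈ L.primeFactors, ∑ i ∈ s, (if q ∣ f i then (q - 1).factorization p else 0) =
      (q - 1).factorization p + (q - 1).factorization p * (#{i ∈ s | q ∣ f i} - 1) :=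
    fun q hq => by
      rw [← sum_filter, sum_const, smul_eq_mul, mul_tsub, mul_one, mul_comm,
        add_tsub_cancel_of_le (Nat.le_mul_of_pos_right _ (card_filter_dvd_pos hf hq))]
  rw [sum_congr rfl fun i hi => factorization_totient_apply (hf i hi) p, sum_add_distrib,
    sum_congr rfl hprimes, sum_comm, sum_congr rfl hsplit, sum_add_distrib,
    factorization_totient_apply hL]
  ring

end Totient

lemma Lk_ne_zero (k : ℕ) : Lk k ≠ 0 := Nat.lcmUpto_ne_zero k

lemma Nat.Prime.dvd_Lk_iff {q k : ℕ} (hq : q.Prime) : q ∣ Lk k ↔ q ≤ k := by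
  show q ∣ Nat.lcmUpto k ↔ q ≤ k
  have h := Nat.mem_primeFactors_of_ne_zero (p := q) (Nat.lcmUpto_ne_zero k)
  rw [Nat.primeFactors_lcmUpto, Nat.mem_primesLE] at h
  simpa [hq] using h.symm

section Progression

variable {k a b c q : ℕ}

def numDvd (k a b c q n : ℕ) : ℕ := #{i ∈ range (k + 1) | q ∣ b + a * (n + i * c)}

lemma numDvd_periodic : Periodic (numDvd k a b c q) q := fun n => by
  refine congrArg card (filter_congr fun i _ => ?_)
  rw [show b + a * (n + q + i * c) = b + a * (n + i * c) + a * q by ring]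
  exact Nat.dvd_add_left (dvd_mul_left q a)

lemma numDvd_of_dvd_mul (hqac : q ∣ a * c) (n : ℕ) :
    numDvd k a b c q n = if q ∣ b + a * n then k + 1 else 0 := by
  have hiff : ∀ i, q ∣ b + a * (n + i * c) ↔ q ∣ b + a * n := fun i => by
    rw [show b + a * (n + i * c) = b + a * n + a * c * i by ring]
    exact Nat.dvd_add_left (hqac.mul_right i)
  split_ifs with h
  · rw [numDvd, filter_true_of_mem fun i _ => (hiff i).mpr h, card_range]
  · rw [numDvd, card_eq_zero, filter_eq_empty_iff]
    exact fun i _ => (hiff i).not.mpr h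

def dvdResidue (a b c q n : ℕ) : ZMod q := -((b : ZMod q) + a * n) * ((a : ZMod q) * c)⁻¹

variable [Fact q.Prime]

lemma dvd_iff_natCast_eq_dvdResidue (hqac : ¬ q ∣ a * c) (n i : ℕ) :
    q ∣ b + a * (n + i * c) ↔ (i : ZMod q) = dvdResidue a b c q n := by
  have hac : (a : ZMod q) * c ≠ 0 := by
    exact_mod_cast (ZMod.natCast_eq_zero_iff _ _).not.mpr hqac
  rw [← ZMod.natCast_eq_zero_iff, dvdResidue, ← div_eq_mul_inv, eq_div_iff hac]
  push_cast
  constructor <;> intro h <;> linear_combination h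

lemma numDvd_eq_of_not_dvd (hqac : ¬ q ∣ a * c) (n : ℕ) :
    numDvd k a b c q n =
      (k + 1) / q + if (dvdResidue a b c q n).val < (k + 1) % q then 1 else 0 := by
  have hcount := Nat.count_modEq_card (k + 1) (Fact.out : q.Prime).pos (dvdResidue a b c q n).val
  rw [Nat.mod_eq_of_lt (ZMod.val_lt _), Nat.count_eq_card_filter_range] at hcount
  rw [← hcount, numDvd]
  refine congrArg card (filter_congr fun i _ => ?_)
  rw [dvd_iff_natCast_eq_dvdResidue hqac, ← ZMod.natCast_eq_natCast_iff, ZMod.natCast_zmod_val]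

lemma numDvd_le_one (hqac : ¬ q ∣ a * c) (hkq : k < q) (n : ℕ) : numDvd k a b c q n ≤ 1 := by
  refine card_le_one.mpr fun i hi j hj => ?_
  simp only [mem_filter, mem_range, dvd_iff_natCast_eq_dvdResidue hqac] at hi hj
  have hij := (ZMod.natCast_eq_natCast_iff' i j q).mp (hi.2.trans hj.2.symm)
  rwa [Nat.mod_eq_of_lt (by omega), Nat.mod_eq_of_lt (by omega)] at hij

lemma exists_natCast_add_mul_eq (hqa : ¬ q ∣ a) (s : ZMod q) :
    ∃ n : ℕ, ((b + a * n : ℕ) : ZMod q) = s := by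
  refine ⟨((s - b) / a).val, ?_⟩
  push_cast
  rw [ZMod.natCast_zmod_val, mul_div_cancel₀ _ ((ZMod.natCast_eq_zero_iff _ _).not.mpr hqa)]
  ring

lemma exists_dvdResidue_eq (hqac : ¬ q ∣ a * c) (t : ZMod q) :
    ∃ n, dvdResidue a b c q n = t := by
  have hac : (a : ZMod q) * c ≠ 0 := by
    exact_mod_cast (ZMod.natCast_eq_zero_iff _ _).not.mpr hqac
  obtain ⟨n, hn⟩ := exists_natCast_add_mul_eq (b := b) (fun h => hqac (h.mul_right c))
    (-(t * (a * c)))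
  refine ⟨n, ?_⟩
  push_cast at hn
  rw [dvdResidue, ← div_eq_mul_inv, hn, neg_neg, mul_div_cancel_right₀ _ hac]

end Progression

def localTerm (p k a b c q n : ℕ) : ℕ := (q - 1).factorization p * (numDvd k a b c q n - 1)

section Valuation

variable {p k a b c : ℕ}

lemma exists_eq_gcd_mul_not_dvd (hp : p.Prime) (ha : 0 < a) (hpa : p ∣ a / a.gcd b) (m : ℕ) :
    ∃ y, b + a * m = a.gcd b * y ∧ ¬ p ∣ y := by
  refine ⟨b / a.gcd b + a / a.gcd b * m, ?_, fun hy => ?_⟩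
  · rw [mul_add, ← mul_assoc, Nat.mul_div_cancel' (Nat.gcd_dvd_right a b),
      Nat.mul_div_cancel' (Nat.gcd_dvd_left a b)]
  · have hpb : p ∣ b / a.gcd b := (Nat.dvd_add_left (hpa.mul_right m)).mp hy
    have hpgcd := Nat.dvd_gcd hpa hpb
    rw [Nat.coprime_div_gcd_div_gcd (Nat.gcd_pos_of_pos_left b ha)] at hpgcd
    exact hp.not_dvd_one hpgcd

lemma sum_primeFactors_lcm_localTerm (ha : 0 < a) (hc : 0 < c) {n : ℕ}
    (hX : ∀ i, b + a * (n + i * c) ≠ 0) :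
    ∑ q ∈ ((range (k + 1)).lcm fun i => b + a * (n + i * c)).primeFactors, localTerm p k a b c q n =
      ∑ q ∈ (a * c * Lk k).primeFactors, localTerm p k a b c q n := by
  set L := (range (k + 1)).lcm fun i => b + a * (n + i * c)
  have hzero : ∀ {q}, numDvd k a b c q n ≤ 1 → localTerm p k a b c q n = 0 := fun h => by
    rw [localTerm, Nat.sub_eq_zero_of_le h, mul_zero]
  have houtside_lcm : ∀ q ∈ L.primeFactors ∪ (a * c * Lk k).primeFactors, q ∉ L.primeFactors →
      localTerm p k a b c q n = 0 := fun q hq hqL => by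
    obtain ⟨hq, -⟩ := Nat.mem_primeFactors.mp (mem_union.mp hq |>.resolve_left hqL)
    have hL : L ≠ 0 := Finset.lcm_eq_zero_iff.not.mpr fun ⟨i, _, hi⟩ => hX i hi
    have h0 : numDvd k a b c q n = 0 := card_eq_zero.mpr (filter_eq_empty_iff.mpr
      fun i hi hdvd => hqL (Nat.mem_primeFactors.mpr ⟨hq, hdvd.trans (dvd_lcm hi), hL⟩))
    exact hzero (h0 ▸ zero_le_one)
  have houtside_W : ∀ q ∈ L.primeFactors ∪ (a * c * Lk k).primeFactors,
      q ∉ (a * c * Lk k).primeFactors → localTerm p k a b c q n = 0 := fun q hq hqW => by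
    obtain ⟨hq, -⟩ := Nat.mem_primeFactors.mp (mem_union.mp hq |>.resolve_right hqW)
    have hacL : a * c * Lk k ≠ 0 := mul_ne_zero (mul_ne_zero ha.ne' hc.ne') (Lk_ne_zero k)
    have hndvd : ¬ q ∣ a * c * Lk k := fun h => hqW (Nat.mem_primeFactors.mpr ⟨hq, h, hacL⟩)
    have : Fact q.Prime := ⟨hq⟩
    exact hzero (numDvd_le_one (fun h => hndvd (h.mul_right _))
      (not_le.mp fun h => hndvd ((hq.dvd_Lk_iff.mpr h).mul_left _)) n)
  rw [sum_subset subset_union_left houtside_lcm, sum_subset subset_union_right houtside_W]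

lemma padicValRat_gkphi_eq_sub (hp : p.Prime) {n : ℕ} (hX : ∀ i, b + a * (n + i * c) ≠ 0) :
    padicValRat p (gkphi k a b c n) =
      ((∑ i ∈ range (k + 1), (b + a * (n + i * c)).totient.factorization p : ℕ) : ℤ) -
        (((range (k + 1)).lcm fun i => b + a * (n + i * c)).totient.factorization p : ℕ) := by
  have : Fact p.Prime := ⟨hp⟩
  have hL : ((range (k + 1)).lcm fun i => b + a * (n + i * c)) ≠ 0 :=
    Finset.lcm_eq_zero_iff.not.mpr fun ⟨i, _, hi⟩ => hX i hi
  rw [gkphi, ← Nat.cast_prod, padicValRat.div (Nat.cast_ne_zero.mpr (prod_ne_zero_iff.mpr fun i _ =>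
      (Nat.totient_pos.mpr (Nat.pos_of_ne_zero (hX i))).ne'))
      (by simpa using hL), padicValRat.of_nat, padicValRat.of_nat,
    ← Nat.factorization_def _ hp, ← Nat.factorization_def _ hp,
    Nat.factorization_prod fun i _ => by simpa using hX i, sum_apply']

theorem padicValRat_gkphi (hp : p.Prime) (ha : 0 < a) (hc : 0 < c) (hpa : p ∣ a / a.gcd b)
    (n : ℕ) :
    padicValRat p (gkphi k a b c n) = ((k * ((a.gcd b).factorization p - 1) +
      ∑ q ∈ (a * c * Lk k).primeFactors, localTerm p k a b c q n : ℕ) : ℤ) := by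
  have hX : ∀ i, b + a * (n + i * c) ≠ 0 ∧
      (b + a * (n + i * c)).factorization p = (a.gcd b).factorization p := fun i => by
    obtain ⟨y, hy, hpy⟩ := exists_eq_gcd_mul_not_dvd hp ha hpa (n + i * c)
    have hy0 : y ≠ 0 := by rintro rfl; exact hpy (dvd_zero p)
    have hd0 : a.gcd b ≠ 0 := (Nat.gcd_pos_of_pos_left b ha).ne'
    rw [hy, Nat.factorization_mul hd0 hy0, Finsupp.add_apply,
      Nat.factorization_eq_zero_of_not_dvd hpy, add_zero]
    exact ⟨mul_ne_zero hd0 hy0, rfl⟩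
  have hL : ((range (k + 1)).lcm fun i => b + a * (n + i * c)).factorization p =
      (a.gcd b).factorization p := by
    rw [Finset.factorization_lcm fun i _ => (hX i).1, sup_congr rfl fun i _ => (hX i).2,
      sup_const nonempty_range_add_one]
  have key := sum_factorization_totient (range (k + 1)) (fun i => b + a * (n + i * c))
    (fun i _ => (hX i).1) p
  have hsum : ∑ i ∈ range (k + 1), ((b + a * (n + i * c)).factorization p - 1) =
      (k + 1) * ((a.gcd b).factorization p - 1) := by
    rw [sum_congr rfl fun i _ => by rw [(hX i).2], sum_const, card_range, smul_eq_mul]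
  rw [hL, hsum] at key
  change _ = _ + _ + ∑ q ∈ _, localTerm p k a b c q n at key
  rw [sum_primeFactors_lcm_localTerm ha hc fun i => (hX i).1] at key
  rw [padicValRat_gkphi_eq_sub hp fun i => (hX i).1, sub_eq_iff_eq_add', ← Nat.cast_add,
    Nat.cast_inj]
  linarith

end Valuation

def primesA (p k a c : ℕ) : Finset ℕ :=
  (Lk k).divisors.filter (fun q => q.Prime ∧ ¬ q ∣ a * c ∧ p ∣ (q - 1) ∧ ¬ q ∣ (k + 1))

def primesB (p a c : ℕ) : Finset ℕ :=
  c.divisors.filter (fun q => q.Prime ∧ ¬ q ∣ a ∧ p ∣ (q - 1))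

section LocalTerm

variable {p k a b c q : ℕ}

lemma primesA_subset_primeFactors (ha : 0 < a) (hc : 0 < c) :
    primesA p k a c ⊆ (a * c * Lk k).primeFactors := fun q hq => by
  obtain ⟨hqL, hq, -⟩ := mem_filter.mp hq
  exact Nat.mem_primeFactors.mpr ⟨hq, (Nat.dvd_of_mem_divisors hqL).mul_left _,
    mul_ne_zero (mul_ne_zero ha.ne' hc.ne') (Lk_ne_zero k)⟩

lemma primesB_subset_primeFactors (ha : 0 < a) (hc : 0 < c) :
    primesB p a c ⊆ (a * c * Lk k).primeFactors := fun q hq => by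
  obtain ⟨hqc, hq, -⟩ := mem_filter.mp hq
  exact Nat.mem_primeFactors.mpr ⟨hq, ((Nat.dvd_of_mem_divisors hqc).mul_left a).mul_right _,
    mul_ne_zero (mul_ne_zero ha.ne' hc.ne') (Lk_ne_zero k)⟩

lemma disjoint_primesA_primesB : Disjoint (primesA p k a c) (primesB p a c) :=
  disjoint_left.mpr fun _ hA hB =>
    (mem_filter.mp hA).2.2.1 ((Nat.dvd_of_mem_divisors (mem_filter.mp hB).1).mul_left a)

lemma localTerm_periodic : Periodic (localTerm p k a b c q) q :=
  numDvd_periodic.comp fun N => (q - 1).factorization p * (N - 1)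

lemma localTerm_const (hq : q ∈ (a * c * Lk k).primeFactors) (hA : q ∉ primesA p k a c)
    (hB : q ∉ primesB p a c) (n m : ℕ) : localTerm p k a b c q n = localTerm p k a b c q m := by
  obtain ⟨hq, hqW, hW⟩ := Nat.mem_primeFactors.mp hq
  have hc : c ≠ 0 := by rintro rfl; simp at hW
  by_cases hpq : p ∣ q - 1
  swap
  · simp [localTerm, Nat.factorization_eq_zero_of_not_dvd hpq]
  suffices numDvd k a b c q n = numDvd k a b c q m by rw [localTerm, localTerm, this]
  by_cases hqa : q ∣ a
  · simp only [numDvd_of_dvd_mul (hqa.mul_right c), Nat.dvd_add_left (hqa.mul_right _)]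
  have hqc : ¬ q ∣ c := fun hqc =>
    hB (mem_filter.mpr ⟨Nat.mem_divisors.mpr ⟨hqc, hc⟩, hq, hqa, hpq⟩)
  have hqac : ¬ q ∣ a * c := hq.prime.not_dvd_mul hqa hqc
  have hqk : q ∣ k + 1 := by
    by_contra hqk
    have hqL : q ∣ Lk k := (hq.dvd_mul.mp hqW).resolve_left hqac
    exact hA (mem_filter.mpr ⟨Nat.mem_divisors.mpr ⟨hqL, Lk_ne_zero k⟩, hq, hqac, hpq, hqk⟩)
  have : Fact q.Prime := ⟨hq⟩
  simp only [numDvd_eq_of_not_dvd hqac, Nat.mod_eq_zero_of_dvd hqk, Nat.not_lt_zero, if_false]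

lemma localTerm_nonconst_of_mem_primesA (hp : p.Prime) (hq : q ∈ primesA p k a c) :
    ∃ n m, localTerm p k a b c q n ≠ localTerm p k a b c q m := by
  obtain ⟨hqL, hq, hqac, hpq, hqk⟩ := mem_filter.mp hq
  have : Fact q.Prime := ⟨hq⟩
  have hv : 0 < (q - 1).factorization p :=
    hp.factorization_pos_of_dvd (by have := hq.two_le; omega) hpq
  have hdiv : 0 < (k + 1) / q :=
    Nat.div_pos (by have := hq.dvd_Lk_iff.mp (Nat.dvd_of_mem_divisors hqL); omega) hq.pos
  have hmod : 0 < (k + 1) % q := Nat.pos_of_ne_zero fun h => hqk (Nat.dvd_of_mod_eq_zero h)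
  obtain ⟨n, hn⟩ := exists_dvdResidue_eq (b := b) hqac 0
  obtain ⟨m, hm⟩ := exists_dvdResidue_eq (b := b) hqac ((k + 1 : ℕ) : ZMod q)
  refine ⟨n, m, fun h => ?_⟩
  rw [localTerm, localTerm, numDvd_eq_of_not_dvd hqac, numDvd_eq_of_not_dvd hqac, hn, hm,
    ZMod.val_zero, ZMod.val_natCast, if_pos hmod, if_neg (lt_irrefl _)] at h
  have := Nat.eq_of_mul_eq_mul_left hv h
  omega

lemma localTerm_nonconst_of_mem_primesB (hp : p.Prime) (hk : 0 < k) (hq : q ∈ primesB p a c) :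
    ∃ n m, localTerm p k a b c q n ≠ localTerm p k a b c q m := by
  obtain ⟨hqc, hq, hqa, hpq⟩ := mem_filter.mp hq
  have : Fact q.Prime := ⟨hq⟩
  have hv : 0 < (q - 1).factorization p :=
    hp.factorization_pos_of_dvd (by have := hq.two_le; omega) hpq
  obtain ⟨n, hn⟩ := exists_natCast_add_mul_eq (b := b) hqa 0
  obtain ⟨m, hm⟩ := exists_natCast_add_mul_eq (b := b) hqa 1
  have hqac : q ∣ a * c := (Nat.dvd_of_mem_divisors hqc).mul_left a
  refine ⟨n, m, ?_⟩
  rw [localTerm, localTerm, numDvd_of_dvd_mul hqac, numDvd_of_dvd_mul hqac,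
    if_pos ((ZMod.natCast_eq_zero_iff _ _).mp hn),
    if_neg fun h => one_ne_zero (hm.symm.trans ((ZMod.natCast_eq_zero_iff _ _).mpr h))]
  simpa using ⟨hv.ne', hk.ne'⟩

end LocalTerm

theorem smallest_local_period_dvd_a'_general (k a b c : ℕ)
    (hk : 1 ≤ k) (ha : 1 ≤ a) (hc : 1 ≤ c)
    (d a' : ℕ) (hd : d = Nat.gcd a b) (ha' : a' = a / d)
    (p : ℕ) (hp : p.Prime) (hpa' : p ∣ a') :
    IsLeast {T : ℕ | 0 < T ∧ ∀ n : ℕ, 0 < n →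
        padicValRat p (gkphi k a b c (n + T)) = padicValRat p (gkphi k a b c n)}
      ((∏ q ∈ (Lk k).divisors.filter
          (fun q => q.Prime ∧ ¬ q ∣ a * c ∧ p ∣ (q - 1) ∧ ¬ q ∣ (k + 1)), q) *
        ∏ q ∈ c.divisors.filter (fun q => q.Prime ∧ ¬ q ∣ a ∧ p ∣ (q - 1)), q) := by
  subst hd ha'
  change IsLeast _ ((∏ q ∈ primesA p k a c, q) * ∏ q ∈ primesB p a c, q)
  rw [← prod_union disjoint_primesA_primesB]
  convert isLeast_periods_sum (localTerm p k a b c)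
    (union_subset (primesA_subset_primeFactors ha hc) (primesB_subset_primeFactors ha hc))
    (fun q hq => (mem_union.mp hq).elim (fun h => (mem_filter.mp h).2.1)
      fun h => (mem_filter.mp h).2.1)
    (fun q _ => localTerm_periodic)
    (fun q hq hqU => localTerm_const hq (fun h => hqU (mem_union_left _ h))
      fun h => hqU (mem_union_right _ h))
    (fun q hq => (mem_union.mp hq).elim (localTerm_nonconst_of_mem_primesA hp)
      (localTerm_nonconst_of_mem_primesB hp hk)) using 1
  ext T
  simp only [Set.mem_ofPred_eq, padicValRat_gkphi hp ha hc hpa', Nat.cast_inj, add_right_inj]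

/-- Lemma 3.5: for a prime `p` with `p ∣ c L_k` and `p ∣ a'` (`a' = a / gcd (a, b)`),
the smallest period of `g_{p,k,φ} (n) = v_p (g_{k,φ} (n))` is
`(∏_{q prime, q ∤ a c, q ∣ L_k, p ∣ q − 1, q ∤ k + 1} q) ⬝ (∏_{q prime, q ∤ a, q ∣ c, p ∣ q − 1} q)`. -/
theorem smallest_local_period_dvd_a' (k a b c : ℕ)
    (hk : 1 ≤ k) (ha : 1 ≤ a) (hc : 1 ≤ c)
    (d a' : ℕ) (hd : d = Nat.gcd a b) (ha' : a' = a / d)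
    (p : ℕ) (hp : p.Prime) (hpdvd : p ∣ c * Lk k) (hpa' : p ∣ a') :
    IsLeast {T : ℕ | 0 < T ∧ ∀ n : ℕ, 0 < n →
        padicValRat p (gkphi k a b c (n + T)) = padicValRat p (gkphi k a b c n)}
      ((∏ q ∈ (Lk k).divisors.filter
          (fun q => q.Prime ∧ ¬ q ∣ a * c ∧ p ∣ (q - 1) ∧ ¬ q ∣ (k + 1)), q) *
        ∏ q ∈ c.divisors.filter (fun q => q.Prime ∧ ¬ q ∣ a ∧ p ∣ (q - 1)), q) :=
  smallest_local_period_dvd_a'_general k a b c hk ha hc d a' hd ha' p hp hpa'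
end
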